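/- arXiv:2504.02062 — 16 statements merged into one kernel-verified Lean document; each statement's English description precedes it below -/
import Mathlib

section
/- Let (A,B,C,D) be a linear system (A n×n, B n×m, C m×n, D m×m, all real) and let Q be a symmetric n×n matrix satisfying the passivity LMI. Then the kernel of Q is A-invariant and contained in the kernel of C: for every vector x with Qx = 0 one has QAx = 0 and Cx = 0. In particular, if the pair (C,A) is observable, then Q is invertible. -/
open Matrix

/-- For a linear system (A,B,C,D), if the symmetric matrix `Q` satisfies the passivity
LMI, then `ker Q` is `A`-invariant and contained in `ker C`; in particular, if `(C,A)` is
observable then `Q` is invertible. -/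
theorem kernel_of_storage_matrix {n m : ℕ}
    (A : Matrix (Fin n) (Fin n) ℝ) (B : Matrix (Fin n) (Fin m) ℝ)
    (C : Matrix (Fin m) (Fin n) ℝ) (D : Matrix (Fin m) (Fin m) ℝ)
    (Q : Matrix (Fin n) (Fin n) ℝ) (hQsym : Qᵀ = Q)
    (hLMI : (Matrix.fromBlocks (-(Aᵀ * Q) - Q * A) (Cᵀ - Q * B)
      (C - Bᵀ * Q) (D + Dᵀ)).PosSemidef) :
    (∀ x : Fin n → ℝ, Q *ᵥ x = 0 → Q *ᵥ (A *ᵥ x) = 0 ∧ C *ᵥ x = 0) ∧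
    ((∀ x : Fin n → ℝ, (∀ k : ℕ, C *ᵥ ((A ^ k) *ᵥ x) = 0) → x = 0) → IsUnit Q) := by
  have key : ∀ x : Fin n → ℝ, Q *ᵥ x = 0 → Q *ᵥ (A *ᵥ x) = 0 ∧ C *ᵥ x = 0 := by
    intro x hx
    set z : Fin n ⊕ Fin m → ℝ := Sum.elim x 0 with hz
    have hMz : (Matrix.fromBlocks (-(Aᵀ * Q) - Q * A) (Cᵀ - Q * B)
        (C - Bᵀ * Q) (D + Dᵀ)) *ᵥ z
        = Sum.elim ((-(Aᵀ * Q) - Q * A) *ᵥ x) ((C - Bᵀ * Q) *ᵥ x) := by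
      rw [hz, fromBlocks_mulVec]
      simp
    have hquad : star z ⬝ᵥ (Matrix.fromBlocks (-(Aᵀ * Q) - Q * A) (Cᵀ - Q * B)
        (C - Bᵀ * Q) (D + Dᵀ)) *ᵥ z = 0 := by
      rw [hMz, hz]
      have : (Sum.elim x (0 : Fin m → ℝ)) ⬝ᵥ
          Sum.elim ((-(Aᵀ * Q) - Q * A) *ᵥ x) ((C - Bᵀ * Q) *ᵥ x)
          = x ⬝ᵥ ((-(Aᵀ * Q) - Q * A) *ᵥ x) := by
        rw [sumElim_dotProduct_sumElim, zero_dotProduct, add_zero]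
      rw [show star (Sum.elim x (0 : Fin m → ℝ)) = Sum.elim x 0 by
        ext (i | j) <;> simp, this]
      have h1 : (-(Aᵀ * Q) - Q * A) *ᵥ x = -(Aᵀ *ᵥ (Q *ᵥ x)) - Q *ᵥ (A *ᵥ x) := by
        rw [sub_mulVec, neg_mulVec, mulVec_mulVec, mulVec_mulVec]
      rw [h1, hx, mulVec_zero, neg_zero, zero_sub, dotProduct_neg,
        neg_eq_zero, dotProduct_mulVec, ← mulVec_transpose, hQsym, hx,
        zero_dotProduct]
    have hMz0 := (hLMI.dotProduct_mulVec_zero_iff z).mp hquad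
    rw [hMz] at hMz0
    have htop : (-(Aᵀ * Q) - Q * A) *ᵥ x = 0 := by
      funext i; exact congrFun hMz0 (Sum.inl i)
    have hbot : (C - Bᵀ * Q) *ᵥ x = 0 := by
      funext j; exact congrFun hMz0 (Sum.inr j)
    rw [sub_mulVec, neg_mulVec, ← mulVec_mulVec, ← mulVec_mulVec, hx, mulVec_zero, neg_zero, zero_sub, neg_eq_zero] at htop
    rw [sub_mulVec, ← mulVec_mulVec, hx, mulVec_zero, sub_zero] at hbot
    exact ⟨htop, hbot⟩
  refine ⟨key, fun hobs => ?_⟩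
  rw [← Matrix.mulVec_injective_iff_isUnit, ← Matrix.coe_mulVecLin,
    ← LinearMap.ker_eq_bot, LinearMap.ker_eq_bot']
  intro x hx
  change Q *ᵥ x = 0 at hx
  have hk : ∀ k : ℕ, Q *ᵥ ((A ^ k) *ᵥ x) = 0 ∧ C *ᵥ ((A ^ k) *ᵥ x) = 0 := by
    intro k
    induction k with
    | zero => simpa using ⟨hx, (key x hx).2⟩
    | succ k ih =>
      have h1 := (key _ ih.1).1
      have heq : (A ^ (k + 1)) *ᵥ x = A *ᵥ ((A ^ k) *ᵥ x) := by
        rw [mulVec_mulVec, ← pow_succ']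
      rw [heq]
      exact ⟨h1, (key _ h1).2⟩
  exact hobs x fun k => (hk k).2
end

section
/- Let (A,B,C,D) be a linear system and σ a signature matrix. Suppose Q is a symmetric invertible n×n matrix satisfying the passivity LMI, and suppose the system satisfies the reciprocity relations with respect to σ and an invertible symmetric matrix G, i.e., AᵀG = GA, BᵀG = σC, σD = Dᵀσ. Then Q' := GQ⁻¹G is symmetric, invertible, and also satisfies the passivity LMI. -/
open Matrix

/-- If an invertible symmetric `Q` satisfies the passivity LMI and the system is reciprocal
with respect to the signature matrix `σ` and invertible symmetric `G`, then `G * Q⁻¹ * G`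
is symmetric, invertible, and also satisfies the passivity LMI. -/
theorem reciprocal_storage_transform {n m : ℕ}
    (A : Matrix (Fin n) (Fin n) ℝ) (B : Matrix (Fin n) (Fin m) ℝ)
    (C : Matrix (Fin m) (Fin n) ℝ) (D : Matrix (Fin m) (Fin m) ℝ)
    (σ : Matrix (Fin m) (Fin m) ℝ) (hσdiag : σ.IsDiag)
    (hσsign : ∀ i, σ i i = 1 ∨ σ i i = -1)
    (Q : Matrix (Fin n) (Fin n) ℝ) (hQsym : Qᵀ = Q) (hQinv : IsUnit Q)
    (hLMI : (Matrix.fromBlocks (-(Aᵀ * Q) - Q * A) (Cᵀ - Q * B)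
      (C - Bᵀ * Q) (D + Dᵀ)).PosSemidef)
    (G : Matrix (Fin n) (Fin n) ℝ) (hGsym : Gᵀ = G) (hGinv : IsUnit G)
    (hrec1 : Aᵀ * G = G * A) (hrec2 : Bᵀ * G = σ * C) (hrec3 : σ * D = Dᵀ * σ) :
    (G * Q⁻¹ * G)ᵀ = G * Q⁻¹ * G ∧ IsUnit (G * Q⁻¹ * G) ∧
    (Matrix.fromBlocks (-(Aᵀ * (G * Q⁻¹ * G)) - (G * Q⁻¹ * G) * A)
      (Cᵀ - (G * Q⁻¹ * G) * B) (C - Bᵀ * (G * Q⁻¹ * G)) (D + Dᵀ)).PosSemidef := by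
  have hQd : IsUnit Q.det := (Matrix.isUnit_iff_isUnit_det Q).mp hQinv
  have hQQ : Q⁻¹ * Q = 1 := Q.nonsing_inv_mul hQd
  have hQQ' : Q * Q⁻¹ = 1 := Q.mul_nonsing_inv hQd
  have hQit : Q⁻¹ᵀ = Q⁻¹ := by rw [Matrix.transpose_nonsing_inv, hQsym]
  have hQiinv : IsUnit (Q⁻¹) := Matrix.isUnit_nonsing_inv_iff.mpr hQinv
  have hσsym : σᵀ = σ := by
    ext i j
    by_cases h : i = j
    · subst h; rfl
    · rw [Matrix.transpose_apply, hσdiag h, hσdiag (Ne.symm h)]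
  have hσσ : σ * σ = 1 := by
    ext i j
    rw [Matrix.mul_apply, Finset.sum_eq_single i
      (fun k _ hk => by rw [hσdiag (Ne.symm hk), zero_mul]) (by simp)]
    by_cases h : i = j
    · subst h; rcases hσsign i with hs | hs <;> simp [hs]
    · rw [hσdiag h, mul_zero, Matrix.one_apply_ne h]
  have hGB : G * B = Cᵀ * σ := by
    have := congrArg Matrix.transpose hrec2
    simpa [Matrix.transpose_mul, hGsym, hσsym] using this
  refine ⟨?_, ?_, ?_⟩
  · simp [Matrix.transpose_mul, hGsym, hQit, Matrix.mul_assoc]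
  · exact (hGinv.mul hQiinv).mul hGinv
  · have t1 : G * Q⁻¹ * (Aᵀ * Q) * (Q⁻¹ * G) = G * Q⁻¹ * G * A := by
      simp only [Matrix.mul_assoc]
      rw [← Matrix.mul_assoc Q Q⁻¹ G, hQQ', Matrix.one_mul, hrec1]
    have t2 : G * Q⁻¹ * (Q * A) * (Q⁻¹ * G) = Aᵀ * (G * Q⁻¹ * G) := by
      simp only [Matrix.mul_assoc]
      rw [← Matrix.mul_assoc Q⁻¹ Q, hQQ, Matrix.one_mul,
        ← Matrix.mul_assoc G A, ← hrec1]
      simp only [Matrix.mul_assoc]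
    have t3 : G * Q⁻¹ * Cᵀ * σ = G * Q⁻¹ * G * B := by
      simp only [Matrix.mul_assoc]
      rw [← hGB]
    have t4 : G * Q⁻¹ * (Q * B) * σ = Cᵀ := by
      simp only [Matrix.mul_assoc]
      rw [← Matrix.mul_assoc Q⁻¹ Q, hQQ, Matrix.one_mul, ← Matrix.mul_assoc G B,
        hGB, Matrix.mul_assoc, hσσ, Matrix.mul_one]
    have t5 : σ * C * (Q⁻¹ * G) = Bᵀ * (G * Q⁻¹ * G) := by
      rw [← hrec2]
      simp only [Matrix.mul_assoc]
    have t6 : σ * (Bᵀ * Q) * (Q⁻¹ * G) = C := by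
      simp only [Matrix.mul_assoc]
      rw [← Matrix.mul_assoc Q Q⁻¹, hQQ', Matrix.one_mul, hrec2,
        ← Matrix.mul_assoc, hσσ, Matrix.one_mul]
    have t7 : σ * D * σ = Dᵀ := by
      rw [hrec3, Matrix.mul_assoc, hσσ, Matrix.mul_one]
    have t8 : σ * Dᵀ * σ = D := by
      rw [Matrix.mul_assoc, ← hrec3, ← Matrix.mul_assoc, hσσ, Matrix.one_mul]
    set T : Matrix (Fin n ⊕ Fin m) (Fin n ⊕ Fin m) ℝ :=
      Matrix.fromBlocks (G * Q⁻¹) 0 0 (-σ) with hT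
    have key := hLMI.mul_mul_conjTranspose_same T
    have hTH : Tᴴ = Matrix.fromBlocks (Q⁻¹ * G) 0 0 (-σ) := by
      rw [Matrix.conjTranspose_eq_transpose_of_trivial, hT, Matrix.fromBlocks_transpose]
      simp [Matrix.transpose_mul, hGsym, hQit, hσsym]
    rw [hTH, hT, Matrix.fromBlocks_multiply, Matrix.fromBlocks_multiply] at key
    simp only [Matrix.mul_zero, Matrix.zero_mul, add_zero, zero_add, sub_zero,
      zero_sub, neg_zero, Matrix.mul_neg, Matrix.neg_mul, Matrix.mul_sub,
      Matrix.sub_mul, Matrix.mul_add, Matrix.add_mul, neg_neg, neg_sub,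
      sub_neg_eq_add] at key
    convert key using 2
    · rw [t1, t2]; try abel
    · rw [t3, t4]; try abel
    · rw [t5, t6]; try abel
    · rw [t7, t8]; try abel
end

section
/- Let (A,B,C) be a linear system with D = 0 satisfying the input-output Hamiltonian relations with σ = I: there is an invertible skew-symmetric n×n matrix Ω with AᵀΩ + ΩA = 0 and BᵀΩ = C. If W is a symmetric invertible n×n matrix satisfying the passivity LMI (with D = 0), then W' := ΩW⁻¹Ω is symmetric, invertible, and also satisfies the passivity LMI. -/
open Matrix

/-- For an input-output Hamiltonian system (σ = I, D = 0) with symplectic form `Ω`,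
if the invertible symmetric `W` satisfies the passivity LMI, then so does `Ω * W⁻¹ * Ω`,
which is moreover symmetric and invertible. -/
theorem ioHamiltonian_storage_transform {n m : ℕ}
    (A : Matrix (Fin n) (Fin n) ℝ) (B : Matrix (Fin n) (Fin m) ℝ)
    (C : Matrix (Fin m) (Fin n) ℝ)
    (Ω : Matrix (Fin n) (Fin n) ℝ) (hΩskew : Ωᵀ = -Ω) (hΩinv : IsUnit Ω)
    (hham1 : Aᵀ * Ω + Ω * A = 0) (hham2 : Bᵀ * Ω = C)
    (W : Matrix (Fin n) (Fin n) ℝ) (hWsym : Wᵀ = W) (hWinv : IsUnit W)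
    (hLMI : (Matrix.fromBlocks (-(Aᵀ * W) - W * A) (Cᵀ - W * B)
      (C - Bᵀ * W) (0 : Matrix (Fin m) (Fin m) ℝ)).PosSemidef) :
    (Ω * W⁻¹ * Ω)ᵀ = Ω * W⁻¹ * Ω ∧ IsUnit (Ω * W⁻¹ * Ω) ∧
    (Matrix.fromBlocks (-(Aᵀ * (Ω * W⁻¹ * Ω)) - (Ω * W⁻¹ * Ω) * A)
      (Cᵀ - (Ω * W⁻¹ * Ω) * B) (C - Bᵀ * (Ω * W⁻¹ * Ω))
      (0 : Matrix (Fin m) (Fin m) ℝ)).PosSemidef := by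
  have hWdet : IsUnit W.det := (Matrix.isUnit_iff_isUnit_det W).mp hWinv
  have hW1 : W * W⁻¹ = 1 := Matrix.mul_nonsing_inv W hWdet
  have hW2 : W⁻¹ * W = 1 := Matrix.nonsing_inv_mul W hWdet
  have hWt : (W⁻¹)ᵀ = W⁻¹ := by
    rw [Matrix.transpose_nonsing_inv, hWsym]
  have hWinv' : IsUnit W⁻¹ := Matrix.isUnit_nonsing_inv_iff.mpr hWinv
  have hA1 : Aᵀ * Ω = -(Ω * A) := eq_neg_of_add_eq_zero_left hham1
  have hA2 : Ω * A = -(Aᵀ * Ω) := eq_neg_of_add_eq_zero_right hham1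
  have hC : Cᵀ = -(Ω * B) := by
    rw [← hham2, Matrix.transpose_mul, Matrix.transpose_transpose, hΩskew,
      Matrix.neg_mul]
  have hWc1 : ∀ X : Matrix (Fin n) (Fin n) ℝ, W * (W⁻¹ * X) = X := fun X => by
    rw [← Matrix.mul_assoc, hW1, Matrix.one_mul]
  have hWc2 : ∀ X : Matrix (Fin n) (Fin n) ℝ, W⁻¹ * (W * X) = X := fun X => by
    rw [← Matrix.mul_assoc, hW2, Matrix.one_mul]
  have hWc1m : ∀ X : Matrix (Fin n) (Fin m) ℝ, W * (W⁻¹ * X) = X := fun X => by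
    rw [← Matrix.mul_assoc, hW1, Matrix.one_mul]
  have hWc2m : ∀ X : Matrix (Fin n) (Fin m) ℝ, W⁻¹ * (W * X) = X := fun X => by
    rw [← Matrix.mul_assoc, hW2, Matrix.one_mul]
  have hA1' : ∀ X : Matrix (Fin n) (Fin n) ℝ, Aᵀ * (Ω * X) = -(Ω * (A * X)) :=
    fun X => by rw [← Matrix.mul_assoc, hA1, Matrix.neg_mul, Matrix.mul_assoc]
  have hB' : ∀ X : Matrix (Fin n) (Fin n) ℝ, Bᵀ * (Ω * X) = C * X := fun X => by
    rw [← Matrix.mul_assoc, hham2]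
  refine ⟨?_, ?_, ?_⟩
  · simp only [Matrix.transpose_mul, hΩskew, hWt, Matrix.neg_mul, Matrix.mul_neg,
      neg_neg, Matrix.mul_assoc]
  · exact (hΩinv.mul hWinv').mul hΩinv
  · have key : (Matrix.fromBlocks (-(Aᵀ * (Ω * W⁻¹ * Ω)) - (Ω * W⁻¹ * Ω) * A)
        (Cᵀ - (Ω * W⁻¹ * Ω) * B) (C - Bᵀ * (Ω * W⁻¹ * Ω))
        (0 : Matrix (Fin m) (Fin m) ℝ)) =
        (Matrix.fromBlocks (W⁻¹ * Ω) 0 0 (-1 : Matrix (Fin m) (Fin m) ℝ))ᴴ *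
        (Matrix.fromBlocks (-(Aᵀ * W) - W * A) (Cᵀ - W * B)
          (C - Bᵀ * W) (0 : Matrix (Fin m) (Fin m) ℝ)) *
        (Matrix.fromBlocks (W⁻¹ * Ω) 0 0 (-1 : Matrix (Fin m) (Fin m) ℝ)) := by
      rw [conjTranspose_eq_transpose_of_trivial, Matrix.fromBlocks_transpose,
        Matrix.fromBlocks_multiply, Matrix.fromBlocks_multiply]
      have hS : (W⁻¹ * Ω)ᵀ = -(Ω * W⁻¹) := by
        rw [Matrix.transpose_mul, hΩskew, hWt, Matrix.neg_mul]
      rw [hS]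
      simp only [Matrix.transpose_zero, Matrix.transpose_neg, Matrix.transpose_one,
        Matrix.zero_mul, Matrix.mul_zero, add_zero, zero_add, Matrix.mul_neg,
        Matrix.neg_mul, Matrix.mul_one, Matrix.one_mul, neg_neg]
      refine Matrix.fromBlocks_inj.mpr ⟨?_, ?_, ?_, ?_⟩ <;>
        first
        | simp
        | (simp only [Matrix.mul_assoc, Matrix.mul_sub, Matrix.sub_mul,
            Matrix.mul_add, Matrix.add_mul, Matrix.neg_mul, Matrix.mul_neg,
            neg_neg, Matrix.mul_one, Matrix.one_mul, Matrix.zero_mul,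
            Matrix.mul_zero, sub_neg_eq_add, hWc1, hWc2, hWc1m, hWc2m,
            hA1', hA2, hC, hB', hham2]
           abel)
    rw [key]
    exact hLMI.conjTranspose_mul_mul_same _
end

section
/- Let A be an n×n Hurwitz matrix and G a symmetric positive semidefinite n×n matrix with AᵀG = GA. Then GA is symmetric and −GA is positive semidefinite. -/
/-!
Write `G = P * P` with `P = √G`, and let `P'` be the pseudo-inverse of `P`, so that
`G * P' = P' * G = P`. The relation `Aᵀ * G = G * A` makes `T = P * A * P' = P' * Aᵀ * P`
symmetric, and `G * A = P * T * P`. If `T *ᵥ v = μ • v` with `μ ≠ 0`, then `P *ᵥ v` is an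
eigenvector of `Aᵀ` for `μ`, so every eigenvalue of `T` is `0` or an eigenvalue of `A`, hence
`≤ 0` because `A` is Hurwitz. Thus `-T`, and with it `-(G * A) = P * (-T) * P`, is positive
semidefinite.
-/

open Matrix

namespace Matrix

variable {n : Type*} [Fintype n]

section Reciprocal

variable {R : Type*} [CommRing R] {A G P P' : Matrix n n R}

theorem mul_mul_eq_mul_transpose_mul (hGP' : G * P' = P) (hP'G : P' * G = P)
    (hrec : Aᵀ * G = G * A) : P * A * P' = P' * Aᵀ * P :=
  calc P * A * P' = P' * G * A * P' := by rw [hP'G]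
    _ = P' * (Aᵀ * G) * P' := by rw [hrec, Matrix.mul_assoc P']
    _ = P' * Aᵀ * (G * P') := by simp only [Matrix.mul_assoc]
    _ = P' * Aᵀ * P := by rw [hGP']

theorem isSymm_mul_transpose_mul (hP : P.IsSymm) (hP' : P'.IsSymm) (hGP' : G * P' = P)
    (hP'G : P' * G = P) (hrec : Aᵀ * G = G * A) : (P' * Aᵀ * P).IsSymm := by
  rw [IsSymm, transpose_mul, transpose_mul, transpose_transpose, hP.eq, hP'.eq,
    ← Matrix.mul_assoc, mul_mul_eq_mul_transpose_mul hGP' hP'G hrec]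

theorem mul_eq_mul_mul_transpose_mul_mul (hPP : P * P = G) (hP'G : P' * G = P)
    (hrec : Aᵀ * G = G * A) : G * A = P * (P' * Aᵀ * P) * P :=
  calc G * A = P * (P' * G) * A := by rw [hP'G, hPP]
    _ = P * P' * (Aᵀ * G) := by rw [hrec]; simp only [Matrix.mul_assoc]
    _ = P * (P' * Aᵀ * P) * P := by rw [← hPP]; simp only [Matrix.mul_assoc]

theorem mul_mul_transpose_mul_eq_transpose_mul (hPP : P * P = G) (hGP' : G * P' = P)
    (hP'G : P' * G = P) (hrec : Aᵀ * G = G * A) : P * (P' * Aᵀ * P) = Aᵀ * P :=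
  calc P * (P' * Aᵀ * P) = P * (P' * Aᵀ * (G * P')) := by rw [hGP']
    _ = P * (P' * (Aᵀ * G) * P') := by simp only [Matrix.mul_assoc]
    _ = P * (P' * G) * A * P' := by rw [hrec]; simp only [Matrix.mul_assoc]
    _ = Aᵀ * G * P' := by rw [hP'G, hPP, ← hrec]
    _ = Aᵀ * P := by rw [Matrix.mul_assoc, hGP']

end Reciprocal

variable [DecidableEq n]

theorem mem_spectrum_iff_exists_mulVec_eq_smul {K : Type*} [Field K] {A : Matrix n n K}
    {μ : K} : μ ∈ spectrum K A ↔ ∃ v ≠ 0, A *ᵥ v = μ • v := by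
  rw [← spectrum_toLin', ← Module.End.hasEigenvalue_iff_mem_spectrum]
  constructor
  · intro h
    obtain ⟨v, hv⟩ := h.exists_hasEigenvector
    exact ⟨v, hv.2, by simpa using hv.apply_eq_smul⟩
  · rintro ⟨v, hv, hAv⟩
    exact Module.End.hasEigenvalue_of_hasEigenvector
      ⟨by simpa [Module.End.mem_eigenspace_iff] using hAv, hv⟩

theorem mem_spectrum_transpose {K : Type*} [Field K] {A : Matrix n n K} {μ : K} :
    μ ∈ spectrum K Aᵀ ↔ μ ∈ spectrum K A := by
  rw [mem_spectrum_iff_isRoot_charpoly, mem_spectrum_iff_isRoot_charpoly, charpoly_transpose]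

theorem ofReal_mem_spectrum_map_ofReal {A : Matrix n n ℝ} {μ : ℝ} (h : μ ∈ spectrum ℝ A) :
    (μ : ℂ) ∈ spectrum ℂ (A.map (fun a => (a : ℂ))) := by
  rw [mem_spectrum_iff_isRoot_charpoly] at h ⊢
  exact charpoly_map A Complex.ofRealHom ▸ h.map

theorem posSemidef_neg_of_spectrum_nonpos {T : Matrix n n ℝ} (hT : T.IsHermitian)
    (h : spectrum ℝ T ⊆ Set.Iic 0) : (-T).PosSemidef := by
  refine posSemidef_iff_isHermitian_and_spectrum_nonneg.mpr ⟨hT.neg, fun μ hμ => ?_⟩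
  rw [← spectrum.neg_eq] at hμ
  exact neg_nonpos.mp (Set.mem_Iic.mp (h hμ))

theorem PosSemidef.exists_sqrt_and_pinv {G : Matrix n n ℝ} (hG : G.PosSemidef) :
    ∃ P P' : Matrix n n ℝ,
      P.IsSymm ∧ P'.IsSymm ∧ P * P = G ∧ G * P' = P ∧ P' * G = P := by
  have hGsa : IsSelfAdjoint G := hG.1
  have hspec : ∀ x ∈ spectrum ℝ G, 0 ≤ x :=
    (posSemidef_iff_isHermitian_and_spectrum_nonneg.mp hG).2
  have hcont (f : ℝ → ℝ) : ContinuousOn f (spectrum ℝ G) :=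
    G.finite_real_spectrum.continuousOn f
  have hsymm (f : ℝ → ℝ) : (cfc f G).IsSymm :=
    isHermitian_iff_isSymm.mp (cfc_predicate f G : IsSelfAdjoint (cfc f G))
  have hid : cfc id G = G := cfc_id ℝ G
  -- `(√0)⁻¹ = 0`, so the second witness is the pseudo-inverse of `√G`.
  refine ⟨cfc Real.sqrt G, cfc (fun x => (Real.sqrt x)⁻¹) G, hsymm _, hsymm _, ?_, ?_, ?_⟩
  · rw [← cfc_mul _ _ _ (hcont _) (hcont _)]
    conv_rhs => rw [← hid]
    exact cfc_congr fun x hx => Real.mul_self_sqrt (hspec x hx)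
  · conv_lhs => arg 1; rw [← hid]
    rw [← cfc_mul _ _ _ (hcont _) (hcont _)]
    exact cfc_congr fun x _ => by rw [id, ← div_eq_mul_inv, Real.div_sqrt]
  · conv_lhs => arg 2; rw [← hid]
    rw [← cfc_mul _ _ _ (hcont _) (hcont _)]
    exact cfc_congr fun x _ => by rw [id, inv_mul_eq_div, Real.div_sqrt]

theorem mem_spectrum_of_mem_spectrum_mul_transpose_mul {K : Type*} [Field K]
    {A G P P' : Matrix n n K} (hPP : P * P = G) (hGP' : G * P' = P) (hP'G : P' * G = P)
    (hrec : Aᵀ * G = G * A) {μ : K} (hμ : μ ∈ spectrum K (P' * Aᵀ * P)) (hμ0 : μ ≠ 0) :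
    μ ∈ spectrum K A := by
  obtain ⟨v, hv, hTv⟩ := mem_spectrum_iff_exists_mulVec_eq_smul.mp hμ
  refine mem_spectrum_transpose.mp
    (mem_spectrum_iff_exists_mulVec_eq_smul.mpr ⟨P *ᵥ v, ?_, ?_⟩)
  · intro hPv
    rw [← mulVec_mulVec, hPv, mulVec_zero, eq_comm, smul_eq_zero] at hTv
    exact hTv.elim hμ0 hv
  · rw [mulVec_mulVec, ← mul_mul_transpose_mul_eq_transpose_mul hPP hGP' hP'G hrec,
      ← mulVec_mulVec, hTv, mulVec_smul]

end Matrix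

/-- If `A` is Hurwitz and `G` is symmetric positive semidefinite with `Aᵀ G = G A`,
then `G * A` is symmetric and `-(G * A)` is positive semidefinite. -/
theorem hurwitz_reciprocal_GA_negSemidef {n : ℕ}
    (A G : Matrix (Fin n) (Fin n) ℝ)
    (hHurwitz : ∀ μ ∈ spectrum ℂ (A.map (fun a => (a : ℂ))), μ.re < 0)
    (hG : G.PosSemidef) (hrec : Aᵀ * G = G * A) :
    (G * A)ᵀ = G * A ∧ (-(G * A)).PosSemidef := by
  obtain ⟨P, P', hP, hP', hPP, hGP', hP'G⟩ := hG.exists_sqrt_and_pinv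
  refine ⟨by rw [transpose_mul, (isHermitian_iff_isSymm.mp hG.1).eq, hrec], ?_⟩
  have hT : (P' * Aᵀ * P).IsHermitian :=
    isHermitian_iff_isSymm.mpr (isSymm_mul_transpose_mul hP hP' hGP' hP'G hrec)
  have hT_nonpos : spectrum ℝ (P' * Aᵀ * P) ⊆ Set.Iic 0 := fun μ hμ =>
    not_lt.mp fun hpos => by
    have hμA := mem_spectrum_of_mem_spectrum_mul_transpose_mul hPP hGP' hP'G hrec hμ hpos.ne'
    exact (hHurwitz μ (ofReal_mem_spectrum_map_ofReal hμA)).not_ge (by simpa using hpos.le)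
  have hPH : Pᴴ = P := (isHermitian_iff_isSymm.mpr hP).eq
  have hGA : -(G * A) = P * -(P' * Aᵀ * P) * Pᴴ := by
    rw [mul_eq_mul_mul_transpose_mul_mul hPP hP'G hrec, hPH, Matrix.mul_neg, Matrix.neg_mul]
  rw [hGA]
  exact (posSemidef_neg_of_spectrum_nonpos hT hT_nonpos).mul_mul_conjTranspose_same P
end

section
/- Let (A,B,C,D) be a linear system with A Hurwitz, and suppose there is a symmetric positive semidefinite matrix G with AᵀG = GA and BᵀG = C (reciprocity with σ = I), and D = Dᵀ is positive semidefinite. Then Q = G satisfies the passivity LMI; i.e., the system is passive with storage function ½xᵀGx. -/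
/-!
Since `AᵀG = GA`, the map `A` is self-adjoint for the semi-inner product `⟨x, y⟩_G = xᵀ G y`.
With `S = √G` and its pseudo-inverse `S⁺`, this is expressed by the symmetric matrix
`T = S⁺ (G A) S⁺`, which satisfies `T S = S A` and `S T S = G A`. The intertwining relation makes
every nonzero eigenvalue of `T` an eigenvalue of `A`, hence negative, so `T ≤ 0` and
`G A = S T S ≤ 0`. Reciprocity then kills the off-diagonal blocks of the passivity matrix and
leaves `-2 G A` and `2 D` on the diagonal.
-/

open Matrix

theorem Module.End.mem_spectrum_of_mul_eq_mul_of_range_le {K V : Type*} [Field K]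
    [AddCommGroup V] [Module K V] [FiniteDimensional K V] {s a t : Module.End K V}
    (hts : t * s = s * a) (hrange : LinearMap.range t ≤ LinearMap.range s) {μ : K} (hμ : μ ≠ 0)
    (ht : μ ∈ spectrum K t) : μ ∈ spectrum K a := by
  by_contra ha
  obtain ⟨u, hu⟩ := (Module.End.hasEigenvalue_iff_mem_spectrum.mpr ht).exists_hasEigenvector
  have htu : t u = μ • u := hu.apply_eq_smul
  obtain ⟨z, rfl⟩ : u ∈ LinearMap.range s := hrange ⟨μ⁻¹ • u, by simp [htu, hμ]⟩
  set f := algebraMap K (Module.End K V) μ - a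
  have hf : LinearMap.ker f = ⊥ := LinearMap.ker_eq_bot.mpr
    ((Module.End.isUnit_iff f).mp (spectrum.notMem_iff.mp ha)).injective
  have hsf (x : V) : s (f x) = μ • s x - t (s x) := by
    simp [f, ← Module.End.mul_apply, hts]
  -- `ker s` is invariant under `f`, hence (as `f` is injective) under `f⁻¹`.
  have hker : ∀ x ∈ LinearMap.ker s, f x ∈ LinearMap.ker s := fun x hx => by
    rw [LinearMap.mem_ker] at hx ⊢
    rw [hsf, hx, map_zero, smul_zero, sub_zero]
  have hfz : z ∈ (LinearMap.ker s).comap f := by simp [hsf, htu]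
  rw [LinearMap.comap_eq_sup_ker_of_disjoint hker (by simp [hf]), hf, sup_bot_eq] at hfz
  exact hu.2 (LinearMap.mem_ker.mp hfz)

namespace Matrix

theorem mem_spectrum_of_mul_eq_mul {K n : Type*} [Field K] [Fintype n] [DecidableEq n]
    {S A T X : Matrix n n K} (hTS : T * S = S * A) (hT : T = S * X) {μ : K} (hμ : μ ≠ 0)
    (ht : μ ∈ spectrum K T) : μ ∈ spectrum K A := by
  rw [← spectrum_toLin'] at ht ⊢
  refine Module.End.mem_spectrum_of_mul_eq_mul_of_range_le (s := S.toLin') ?_ ?_ hμ ht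
  · simpa only [toLin'_mul, Module.End.mul_eq_comp] using congrArg toLin' hTS
  · rw [hT, toLin'_mul]
    exact LinearMap.range_comp_le_range _ _

theorem apply_mem_spectrum_map {K L n : Type*} [Field K] [Field L] [Fintype n] [DecidableEq n]
    (f : K →+* L) {A : Matrix n n K} {μ : K} (hμ : μ ∈ spectrum K A) :
    f μ ∈ spectrum L (A.map f) := by
  rw [mem_spectrum_iff_isRoot_charpoly, charpoly_map] at *
  exact hμ.map

open scoped ComplexOrder in
theorem PosSemidef.exists_sqrt_pinv {𝕜 n : Type*} [RCLike 𝕜] [Fintype n] [DecidableEq n]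
    {G : Matrix n n 𝕜} (hG : G.PosSemidef) :
    ∃ S S' : Matrix n n 𝕜, Sᴴ = S ∧ S'ᴴ = S' ∧ S * S = G ∧ S' * G = S ∧ G * S' = S := by
  have : IsSelfAdjoint G := hG.isHermitian
  have hspec : ∀ x ∈ spectrum ℝ G, 0 ≤ x := fun x hx => by
    obtain ⟨i, rfl⟩ := hG.isHermitian.spectrum_real_eq_range_eigenvalues ▸ hx
    exact hG.eigenvalues_nonneg i
  have hcont (f : ℝ → ℝ) : ContinuousOn f (spectrum ℝ G) := G.finite_real_spectrum.continuousOn f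
  -- `(√x)⁻¹` vanishes at `0`, so the second matrix is the Moore–Penrose inverse of the first.
  refine ⟨cfc Real.sqrt G, cfc (fun x => (Real.sqrt x)⁻¹) G,
    cfc_predicate (p := IsSelfAdjoint) _ G, cfc_predicate (p := IsSelfAdjoint) _ G, ?_, ?_, ?_⟩
  · rw [← cfc_mul _ _ _ (hcont _) (hcont _)]
    conv_rhs => rw [← cfc_id' ℝ G]
    exact cfc_congr fun x hx => Real.mul_self_sqrt (hspec x hx)
  · conv_lhs => arg 2; rw [← cfc_id' ℝ G]
    rw [← cfc_mul _ _ _ (hcont _) (hcont _)]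
    exact cfc_congr fun x _ => by simp only [inv_mul_eq_div, Real.div_sqrt]
  · conv_lhs => arg 1; rw [← cfc_id' ℝ G]
    rw [← cfc_mul _ _ _ (hcont _) (hcont _)]
    exact cfc_congr fun x _ => by simp only [← div_eq_mul_inv, Real.div_sqrt]

theorem PosSemidef.neg_mul_of_transpose_mul_eq {n : Type*} [Fintype n] [DecidableEq n]
    {G A : Matrix n n ℝ} (hG : G.PosSemidef) (hAG : Aᵀ * G = G * A)
    (hA : ∀ μ ∈ spectrum ℝ A, μ ≤ 0) : (-(G * A)).PosSemidef := by
  obtain ⟨S, S', hS, hS', hSS, hS'G, hGS'⟩ := hG.exists_sqrt_pinv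
  have hGA : (G * A)ᴴ = G * A := by
    rw [conjTranspose_mul, hG.isHermitian.eq, conjTranspose_eq_transpose_of_trivial, hAG]
  set T := S' * (G * A) * S'
  have hTS : T * S = S * A := calc
    T * S = S' * Aᵀ * (G * S') * S := by simp only [T, ← hAG, mul_assoc]
    _ = S' * (G * A) := by rw [hGS', mul_assoc _ S S, hSS, mul_assoc, hAG]
    _ = S * A := by rw [← mul_assoc, hS'G]
  have hT : T = S * (A * S') := by simp only [T, ← mul_assoc, hS'G]
  have hTH : T.IsHermitian := by
    simpa only [hS', hGA] using isHermitian_conjTranspose_mul_mul S' (A := G * A) hGA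
  have hTspec : ∀ μ ∈ spectrum ℝ (-T), 0 ≤ μ := by
    intro μ hμ
    rw [← spectrum.neg_eq, Set.mem_neg] at hμ
    by_contra hneg
    exact hneg (by linarith [hA _ (mem_spectrum_of_mul_eq_mul hTS hT (by linarith) hμ)])
  have hnegT : (-T).PosSemidef :=
    posSemidef_iff_isHermitian_and_spectrum_nonneg.mpr ⟨hTH.neg, hTspec⟩
  have hSTS : S * T * S = G * A := by rw [mul_assoc, hTS, ← mul_assoc, hSS]
  simpa only [hS, mul_neg, neg_mul, hSTS] using hnegT.conjTranspose_mul_mul_same S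

open scoped ComplexOrder MatrixOrder in
theorem PosSemidef.fromBlocks_zero {𝕜 m n : Type*} [RCLike 𝕜] [Fintype m] [Fintype n]
    [DecidableEq m] [DecidableEq n] {P : Matrix m m 𝕜} {Q : Matrix n n 𝕜} (hP : P.PosSemidef)
    (hQ : Q.PosSemidef) : (fromBlocks P 0 0 Q).PosSemidef := by
  obtain ⟨X, rfl⟩ := CStarAlgebra.nonneg_iff_eq_star_mul_self.mp hP.nonneg
  obtain ⟨Y, rfl⟩ := CStarAlgebra.nonneg_iff_eq_star_mul_self.mp hQ.nonneg
  simpa [star_eq_conjTranspose, fromBlocks_conjTranspose, fromBlocks_multiply] using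
    posSemidef_conjTranspose_mul_self (fromBlocks X 0 0 Y)

end Matrix

/-- A reciprocal system (σ = I) with `A` Hurwitz, `G ≥ 0`, and `D = Dᵀ ≥ 0` is passive:
`Q = G` satisfies the passivity LMI. -/
theorem reciprocal_hurwitz_passive {n m : ℕ}
    (A : Matrix (Fin n) (Fin n) ℝ) (B : Matrix (Fin n) (Fin m) ℝ)
    (C : Matrix (Fin m) (Fin n) ℝ) (D : Matrix (Fin m) (Fin m) ℝ)
    (hHurwitz : ∀ μ ∈ spectrum ℂ (A.map (fun a => (a : ℂ))), μ.re < 0)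
    (G : Matrix (Fin n) (Fin n) ℝ) (hG : G.PosSemidef)
    (hrec1 : Aᵀ * G = G * A) (hrec2 : Bᵀ * G = C)
    (hDsym : Dᵀ = D) (hDpos : D.PosSemidef) :
    (Matrix.fromBlocks (-(Aᵀ * G) - G * A) (Cᵀ - G * B)
      (C - Bᵀ * G) (D + Dᵀ)).PosSemidef := by
  have hA : ∀ μ ∈ spectrum ℝ A, μ ≤ 0 := fun μ hμ => by
    simpa using (hHurwitz _ (A.apply_mem_spectrum_map Complex.ofRealHom hμ)).le
  have hGA : (-(G * A)).PosSemidef := hG.neg_mul_of_transpose_mul_eq hrec1 hA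
  have hGt : Gᵀ = G := by rw [← conjTranspose_eq_transpose_of_trivial, hG.isHermitian.eq]
  have h₁₂ : Cᵀ - G * B = 0 := by rw [← hrec2, transpose_mul, transpose_transpose, hGt, sub_self]
  have h₂₁ : C - Bᵀ * G = 0 := by rw [← hrec2, sub_self]
  have h₁₁ : -(Aᵀ * G) - G * A = -(G * A) + -(G * A) := by rw [hrec1, sub_eq_add_neg]
  rw [h₁₁, h₁₂, h₂₁, hDsym]
  exact PosSemidef.fromBlocks_zero (hGA.add hGA) (hDpos.add hDpos)
end

section
/- Let (A,B) be a controllable pair, and let G₁ and G₂ be symmetric n×n matrices with AᵀG₁ = G₁A, AᵀG₂ = G₂A, and BᵀG₁ = BᵀG₂. Then G₁ = G₂. (Uniqueness of the pseudo-inner product G of a reciprocal system.) -/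
open Matrix

/-- Uniqueness of the pseudo-inner product `G` of a reciprocal system: if `(A,B)` is
controllable and two symmetric matrices `G₁, G₂` satisfy `Aᵀ Gᵢ = Gᵢ A` and
`Bᵀ G₁ = Bᵀ G₂`, then `G₁ = G₂`. -/
theorem reciprocal_G_unique {n m : ℕ}
    (A : Matrix (Fin n) (Fin n) ℝ) (B : Matrix (Fin n) (Fin m) ℝ)
    (hctrb : ∀ v : Fin n → ℝ, (∀ k : ℕ, Bᵀ *ᵥ ((Aᵀ ^ k) *ᵥ v) = 0) → v = 0)
    (G₁ G₂ : Matrix (Fin n) (Fin n) ℝ) (hG₁ : G₁ᵀ = G₁) (hG₂ : G₂ᵀ = G₂)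
    (h₁ : Aᵀ * G₁ = G₁ * A) (h₂ : Aᵀ * G₂ = G₂ * A)
    (hB : Bᵀ * G₁ = Bᵀ * G₂) : G₁ = G₂ := by
  set D := G₁ - G₂ with hD
  have hAD : ∀ k : ℕ, Aᵀ ^ k * D = D * A ^ k := by
    intro k
    induction k with
    | zero => simp
    | succ k ih =>
      have h : Aᵀ * D = D * A := by rw [hD, Matrix.sub_mul, Matrix.mul_sub, h₁, h₂]
      calc Aᵀ ^ (k+1) * D = Aᵀ ^ k * (Aᵀ * D) := by rw [pow_succ, Matrix.mul_assoc]
        _ = Aᵀ ^ k * D * A := by rw [h, Matrix.mul_assoc]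
        _ = D * A ^ (k+1) := by rw [ih, Matrix.mul_assoc, ← pow_succ]
  have hBD : Bᵀ * D = 0 := by
    rw [hD, Matrix.mul_sub, hB, sub_self]
  have hDw : ∀ w : Fin n → ℝ, D *ᵥ w = 0 := by
    intro w
    apply hctrb
    intro k
    rw [mulVec_mulVec, mulVec_mulVec, Matrix.mul_assoc, hAD, ← Matrix.mul_assoc, hBD,
      Matrix.zero_mul, zero_mulVec]
  have hD0 : D = 0 := by
    ext i j
    have := congrFun (hDw (Pi.single j 1)) i
    simpa [mulVec_single] using this
  have := sub_eq_zero.mp hD0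
  exact this
end

section
/- Let (A,B) be a controllable pair, and let Ω₁ and Ω₂ be skew-symmetric n×n matrices with AᵀΩ₁ + Ω₁A = 0, AᵀΩ₂ + Ω₂A = 0, and BᵀΩ₁ = BᵀΩ₂. Then Ω₁ = Ω₂. (Uniqueness of the symplectic form Ω of an input-output Hamiltonian system.) -/
open Matrix

/-- Uniqueness of the symplectic form `Ω` of an input-output Hamiltonian system: if
`(A,B)` is controllable and two skew-symmetric matrices `Ω₁, Ω₂` satisfy
`Aᵀ Ωᵢ + Ωᵢ A = 0` and `Bᵀ Ω₁ = Bᵀ Ω₂`, then `Ω₁ = Ω₂`. -/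
theorem ioHamiltonian_Omega_unique {n m : ℕ}
    (A : Matrix (Fin n) (Fin n) ℝ) (B : Matrix (Fin n) (Fin m) ℝ)
    (hctrb : ∀ v : Fin n → ℝ, (∀ k : ℕ, Bᵀ *ᵥ ((Aᵀ ^ k) *ᵥ v) = 0) → v = 0)
    (Ω₁ Ω₂ : Matrix (Fin n) (Fin n) ℝ) (hΩ₁ : Ω₁ᵀ = -Ω₁) (hΩ₂ : Ω₂ᵀ = -Ω₂)
    (h₁ : Aᵀ * Ω₁ + Ω₁ * A = 0) (h₂ : Aᵀ * Ω₂ + Ω₂ * A = 0)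
    (hB : Bᵀ * Ω₁ = Bᵀ * Ω₂) : Ω₁ = Ω₂ := by
  set Δ := Ω₁ - Ω₂ with hΔ
  have hcomm : Aᵀ * Δ = Δ * (-A) := by
    have e1 : Aᵀ * Ω₁ = -(Ω₁ * A) := eq_neg_of_add_eq_zero_left h₁
    have e2 : Aᵀ * Ω₂ = -(Ω₂ * A) := eq_neg_of_add_eq_zero_left h₂
    simp only [hΔ, Matrix.mul_sub, Matrix.sub_mul, Matrix.mul_neg, e1, e2]
    abel
  have hpow : ∀ k : ℕ, Aᵀ ^ k * Δ = Δ * (-A) ^ k := by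
    intro k
    induction k with
    | zero => simp
    | succ k ih =>
      rw [pow_succ', pow_succ', mul_assoc, ih, ← mul_assoc, hcomm, mul_assoc]
  have hBΔ : Bᵀ * Δ = 0 := by
    simp only [hΔ, Matrix.mul_sub, hB, sub_self]
  have key : ∀ k : ℕ, Bᵀ * (Aᵀ ^ k * Δ) = 0 := by
    intro k
    rw [hpow, ← Matrix.mul_assoc, hBΔ, Matrix.zero_mul]
  have hΔ0 : Δ = 0 := by
    ext i j
    have hv : (fun j' => Δ j' j) = 0 := by
      apply hctrb
      intro k
      have hv' : (fun j' => Δ j' j) = Δ *ᵥ Pi.single j 1 := by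
        ext i'; simp [Matrix.mulVec_single]
      rw [hv', Matrix.mulVec_mulVec, Matrix.mulVec_mulVec, Matrix.mul_assoc,
        key k, Matrix.zero_mulVec]
    have := congrFun hv i
    simpa using this
  have := sub_eq_zero.mp hΔ0
  exact this
end

section
/- Let (A,B) be a controllable pair and C an m×n matrix. Suppose R is an invertible n×n matrix satisfying the signed time-reversibility relations RA = −AR, RB = B, C = CR. Then R is the unique matrix satisfying these relations, and R² = I, i.e., the signed time-reversibility map is an involution. -/
open Matrix

private lemma ctrb_key {n m : ℕ}
    (A : Matrix (Fin n) (Fin n) ℝ) (B : Matrix (Fin n) (Fin m) ℝ)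
    (hctrb : ∀ v : Fin n → ℝ, (∀ k : ℕ, Bᵀ *ᵥ ((Aᵀ ^ k) *ᵥ v) = 0) → v = 0)
    (M : Matrix (Fin n) (Fin n) ℝ) (hM : ∀ k : ℕ, M * A ^ k * B = 0) :
    M = 0 := by
  ext i j
  have hv : (fun p => M i p) = 0 := by
    apply hctrb
    intro k
    funext r
    have h := congrFun (congrFun (hM k) i) r
    simp only [Matrix.zero_apply] at h
    rw [Pi.zero_apply, ← h]
    simp only [mulVec, dotProduct, Matrix.mul_apply, transpose_apply,
      ← Matrix.transpose_pow, Finset.mul_sum, Finset.sum_mul]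
    apply Finset.sum_congr rfl
    intro q _
    apply Finset.sum_congr rfl
    intro p _
    ring
  exact congrFun hv j

private lemma rev_pow {n m : ℕ}
    (A : Matrix (Fin n) (Fin n) ℝ) (B : Matrix (Fin n) (Fin m) ℝ)
    (R : Matrix (Fin n) (Fin n) ℝ)
    (h1 : R * A = -(A * R)) (h2 : R * B = B) :
    ∀ k : ℕ, R * (A ^ k * B) = ((-1 : ℝ) ^ k) • (A ^ k * B) := by
  intro k
  induction k with
  | zero => simp [h2]
  | succ k ih =>
      rw [pow_succ' A k, Matrix.mul_assoc A (A ^ k) B]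
      have hx : R * (A * (A ^ k * B)) = -(A * (R * (A ^ k * B))) := by
        rw [← Matrix.mul_assoc, h1, Matrix.neg_mul, Matrix.mul_assoc]
      rw [hx, ih, Matrix.mul_smul, pow_succ, mul_comm ((-1:ℝ) ^ k) (-1),
        neg_one_mul, neg_smul]

/-- For a controllable pair `(A,B)`, an invertible `R` satisfying the signed
time-reversibility relations `RA = -AR`, `RB = B`, `C = CR` is unique and is an
involution: `R² = I`. -/
theorem signed_time_reversibility_unique_involution {n m : ℕ}
    (A : Matrix (Fin n) (Fin n) ℝ) (B : Matrix (Fin n) (Fin m) ℝ)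
    (C : Matrix (Fin m) (Fin n) ℝ)
    (hctrb : ∀ v : Fin n → ℝ, (∀ k : ℕ, Bᵀ *ᵥ ((Aᵀ ^ k) *ᵥ v) = 0) → v = 0)
    (R : Matrix (Fin n) (Fin n) ℝ) (hRinv : IsUnit R)
    (h1 : R * A = -(A * R)) (h2 : R * B = B) (h3 : C = C * R) :
    (∀ R' : Matrix (Fin n) (Fin n) ℝ, IsUnit R' →
      R' * A = -(A * R') → R' * B = B → C = C * R' → R' = R) ∧
    R * R = 1 := by
  have hR := rev_pow A B R h1 h2
  constructor
  · intro R' _ h1' h2' _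
    have hR' := rev_pow A B R' h1' h2'
    have : R' - R = 0 := by
      apply ctrb_key A B hctrb
      intro k
      rw [Matrix.sub_mul, Matrix.sub_mul, Matrix.mul_assoc, Matrix.mul_assoc,
        hR, hR', sub_self]
    exact sub_eq_zero.mp this
  · have : R * R - 1 = 0 := by
      apply ctrb_key A B hctrb
      intro k
      rw [Matrix.sub_mul, Matrix.sub_mul, Matrix.one_mul, Matrix.mul_assoc (R * R),
        Matrix.mul_assoc R R, hR, Matrix.mul_smul, hR, smul_smul]
      have h4 : (-1 : ℝ) ^ k * (-1) ^ k = 1 := by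
        rw [← pow_add]
        exact Even.neg_one_pow ⟨k, rfl⟩
      rw [h4, one_smul, sub_self]
    exact sub_eq_zero.mp this
end

section
/- Let (A,B,C) be a linear system with (A,B) controllable. Suppose the system is reciprocal: there is a symmetric invertible G with AᵀG = GA and BᵀG = C; and signed time-reversible: there is an invertible R with RA = −AR, RB = B, C = CR. Then R² = I, RᵀGR = G, and Q := GR is symmetric, invertible, and satisfies AᵀQ + QA = 0 and BᵀQ = C; that is, the system (with D = 0) is cyclo-lossless with storage matrix Q. -/
open Matrix

/-- A minimal (controllable) system that is reciprocal and signed time-reversible is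
cyclo-lossless: `R² = I`, `Rᵀ G R = G`, and `Q := G R` is a symmetric invertible storage
matrix with `Aᵀ Q + Q A = 0` and `Bᵀ Q = C`. -/
theorem reciprocal_signed_time_reversible_cyclolossless {n m : ℕ}
    (A : Matrix (Fin n) (Fin n) ℝ) (B : Matrix (Fin n) (Fin m) ℝ)
    (C : Matrix (Fin m) (Fin n) ℝ)
    (hctrb : ∀ v : Fin n → ℝ, (∀ k : ℕ, Bᵀ *ᵥ ((Aᵀ ^ k) *ᵥ v) = 0) → v = 0)
    (G : Matrix (Fin n) (Fin n) ℝ) (hGsym : Gᵀ = G) (hGinv : IsUnit G)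
    (hrec1 : Aᵀ * G = G * A) (hrec2 : Bᵀ * G = C)
    (R : Matrix (Fin n) (Fin n) ℝ) (hRinv : IsUnit R)
    (hrev1 : R * A = -(A * R)) (hrev2 : R * B = B) (hrev3 : C = C * R) :
    R * R = 1 ∧ Rᵀ * G * R = G ∧
    (G * R)ᵀ = G * R ∧ IsUnit (G * R) ∧
    Aᵀ * (G * R) + (G * R) * A = 0 ∧ Bᵀ * (G * R) = C := by
  -- key: a matrix all of whose "controllability pairings" vanish is zero
  have key : ∀ M : Matrix (Fin n) (Fin n) ℝ,
      (∀ k : ℕ, Bᵀ * (Aᵀ) ^ k * M = 0) → M = 0 := by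
    intro M hM
    ext i j
    have hv : (fun i => M i j) = 0 := by
      apply hctrb
      intro k
      funext l
      have h0 : (Bᵀ * Aᵀ ^ k * M) l j = 0 := by rw [hM k]; rfl
      calc (Bᵀ *ᵥ (Aᵀ ^ k *ᵥ fun i => M i j)) l
          = (Bᵀ * Aᵀ ^ k * M) l j := by
            simp [mulVec, mul_apply, dotProduct, Finset.mul_sum, Finset.sum_mul,
              mul_assoc]
            rw [Finset.sum_comm]
        _ = 0 := h0
    exact congrFun hv i
  -- Step 1 : R * R = 1
  have hR2 : R * R = 1 := by
    set M : Matrix (Fin n) (Fin n) ℝ := R * R - 1 with hMdef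
    have hMA : M * A = A * M := by
      have h : R * R * A = A * (R * R) := by
        calc R * R * A = R * (R * A) := by rw [mul_assoc]
          _ = R * -(A * R) := by rw [hrev1]
          _ = -(R * A) * R := by noncomm_ring
          _ = -(-(A * R)) * R := by rw [hrev1]
          _ = A * (R * R) := by noncomm_ring
      simp [hMdef, sub_mul, mul_sub, h]
    have hMB : M * B = 0 := by
      rw [hMdef, Matrix.sub_mul, Matrix.mul_assoc, hrev2, hrev2, Matrix.one_mul,
        sub_self]
    have hMcomm : ∀ k : ℕ, M * A ^ k = A ^ k * M := by
      intro k
      exact (Commute.pow_right (a := M) (b := A) hMA k)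
    have hMT : Mᵀ = 0 := by
      apply key
      intro k
      have h : M * A ^ k * B = 0 := by
        rw [hMcomm k, Matrix.mul_assoc, hMB, Matrix.mul_zero]
      calc Bᵀ * Aᵀ ^ k * Mᵀ = (M * A ^ k * B)ᵀ := by
            simp [Matrix.transpose_mul, Matrix.transpose_pow, Matrix.mul_assoc]
        _ = 0 := by rw [h]; exact Matrix.transpose_zero
    have hM0 : M = 0 := by
      have := congrArg Matrix.transpose hMT
      simpa using this
    rw [hMdef] at hM0
    have := sub_eq_zero.mp hM0
    simpa using this
  -- Step 2 : Rᵀ * G * R = G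
  have hRGR : Rᵀ * G * R = G := by
    set M : Matrix (Fin n) (Fin n) ℝ := Rᵀ * G * R - G with hMdef
    have hAM : Aᵀ * M = M * A := by
      have h1 : Aᵀ * (Rᵀ * G * R) = (Rᵀ * G * R) * A := by
        have hAR : A * R = -(R * A) := by
          rw [hrev1]; simp
        calc Aᵀ * (Rᵀ * G * R) = (R * A)ᵀ * (G * R) := by
              rw [Matrix.transpose_mul]; noncomm_ring
          _ = (-(A * R))ᵀ * (G * R) := by rw [hrev1]
          _ = -(Rᵀ * (Aᵀ * G) * R) := by
              rw [Matrix.transpose_neg, Matrix.transpose_mul]; noncomm_ring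
          _ = -(Rᵀ * (G * A) * R) := by rw [hrec1]
          _ = -(Rᵀ * G * (A * R)) := by noncomm_ring
          _ = -(Rᵀ * G * -(R * A)) := by rw [hAR]
          _ = (Rᵀ * G * R) * A := by noncomm_ring
      simp [hMdef, mul_sub, sub_mul, h1, hrec1]
    have hBM : Bᵀ * M = 0 := by
      have h : Bᵀ * (Rᵀ * G * R) = C := by
        calc Bᵀ * (Rᵀ * G * R) = (R * B)ᵀ * G * R := by
              simp [Matrix.transpose_mul, Matrix.mul_assoc]
          _ = Bᵀ * G * R := by rw [hrev2]
          _ = C * R := by rw [hrec2]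
          _ = C := hrev3.symm
      rw [hMdef, Matrix.mul_sub, h, hrec2, sub_self]
    have hAk : ∀ k : ℕ, (Aᵀ) ^ k * M = M * A ^ k := by
      intro k
      induction k with
      | zero => simp
      | succ k ih =>
        rw [pow_succ, pow_succ, mul_assoc, hAM, ← mul_assoc, ih, mul_assoc]
    have hM0 : M = 0 := by
      apply key
      intro k
      rw [Matrix.mul_assoc, hAk k, ← Matrix.mul_assoc, hBM, Matrix.zero_mul]
    rw [hMdef] at hM0
    exact sub_eq_zero.mp hM0
  refine ⟨hR2, hRGR, ?_, hGinv.mul hRinv, ?_, ?_⟩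
  · -- symmetry of G * R
    calc (G * R)ᵀ = Rᵀ * G := by rw [Matrix.transpose_mul, hGsym]
      _ = Rᵀ * G * (R * R) := by rw [hR2]; noncomm_ring
      _ = (Rᵀ * G * R) * R := by noncomm_ring
      _ = G * R := by rw [hRGR]
  · -- Aᵀ Q + Q A = 0
    calc Aᵀ * (G * R) + G * R * A
        = (Aᵀ * G) * R + G * (R * A) := by noncomm_ring
      _ = (G * A) * R + G * (-(A * R)) := by rw [hrec1, hrev1]
      _ = 0 := by noncomm_ring
  · -- Bᵀ Q = C
    calc Bᵀ * (G * R) = (Bᵀ * G) * R := (Matrix.mul_assoc _ _ _).symm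
      _ = C * R := by rw [hrec2]
      _ = C := hrev3.symm
end

section
/- Let (A,B,C,D) be a linear system with (A,B) controllable. Suppose the system is cyclo-lossless with invertible storage matrix Q = Qᵀ, i.e., AᵀQ + QA = 0, BᵀQ = C, D + Dᵀ = 0; and reciprocal with invertible pseudo-inner product G = Gᵀ, i.e., AᵀG = GA, BᵀG = C, D = Dᵀ. Then D = 0, Q = GQ⁻¹G, and the matrix R := Q⁻¹G satisfies R² = I, RA = −AR, RB = B, and CR = C; that is, the system is signed time-reversible with signed time-reversibility map R. -/
open Matrix

/-- A controllable system that is cyclo-lossless (with invertible storage matrix `Q`)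
and reciprocal (with invertible pseudo-inner product `G`) satisfies `D = 0`,
`Q = G Q⁻¹ G`, and is signed time-reversible with map `R := Q⁻¹ G`. -/
theorem cyclolossless_reciprocal_signed_time_reversible {n m : ℕ}
    (A : Matrix (Fin n) (Fin n) ℝ) (B : Matrix (Fin n) (Fin m) ℝ)
    (C : Matrix (Fin m) (Fin n) ℝ) (D : Matrix (Fin m) (Fin m) ℝ)
    (hctrb : ∀ v : Fin n → ℝ, (∀ k : ℕ, Bᵀ *ᵥ ((Aᵀ ^ k) *ᵥ v) = 0) → v = 0)
    (Q : Matrix (Fin n) (Fin n) ℝ) (hQsym : Qᵀ = Q) (hQinv : IsUnit Q)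
    (hcl1 : Aᵀ * Q + Q * A = 0) (hcl2 : Bᵀ * Q = C) (hcl3 : D + Dᵀ = 0)
    (G : Matrix (Fin n) (Fin n) ℝ) (hGsym : Gᵀ = G) (hGinv : IsUnit G)
    (hrec1 : Aᵀ * G = G * A) (hrec2 : Bᵀ * G = C) (hrec3 : D = Dᵀ) :
    D = 0 ∧ Q = G * Q⁻¹ * G ∧
    (Q⁻¹ * G) * (Q⁻¹ * G) = 1 ∧
    (Q⁻¹ * G) * A = -(A * (Q⁻¹ * G)) ∧
    (Q⁻¹ * G) * B = B ∧
    C * (Q⁻¹ * G) = C := by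
  -- D = 0
  have hD : D = 0 := by
    have h : D + D = 0 := by rw [← hrec3] at hcl3; exact hcl3
    ext i j
    have := congrFun (congrFun h i) j
    simp only [Matrix.add_apply, Matrix.zero_apply] at this
    simpa using by linarith
  -- invertibility facts
  have hQd : IsUnit Q.det := (Matrix.isUnit_iff_isUnit_det Q).mp hQinv
  have hQQ : Q⁻¹ * Q = 1 := Matrix.nonsing_inv_mul Q hQd
  have hQQ' : Q * Q⁻¹ = 1 := Matrix.mul_nonsing_inv Q hQd
  -- Lyapunov relations
  have hAQ : Aᵀ * Q = -(Q * A) := eq_neg_of_add_eq_zero_left hcl1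
  have hQiA : Q⁻¹ * Aᵀ = -(A * Q⁻¹) := by
    calc Q⁻¹ * Aᵀ = Q⁻¹ * Aᵀ * 1 := (mul_one _).symm
      _ = Q⁻¹ * Aᵀ * (Q * Q⁻¹) := by rw [hQQ']
      _ = Q⁻¹ * (Aᵀ * Q) * Q⁻¹ := by simp only [mul_assoc]
      _ = Q⁻¹ * (-(Q * A)) * Q⁻¹ := by rw [hAQ]
      _ = -(Q⁻¹ * Q * (A * Q⁻¹)) := by simp only [mul_neg, neg_mul, mul_assoc]
      _ = -(A * Q⁻¹) := by rw [hQQ, one_mul]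
  -- G B = Q B
  have hGB : G * B = Q * B := by
    have h := hrec2.trans hcl2.symm
    have := congrArg Matrix.transpose h
    simpa [Matrix.transpose_mul, hGsym, hQsym] using this
  -- the difference T
  set S : Matrix (Fin n) (Fin n) ℝ := G * Q⁻¹ * G with hS
  have hAS : Aᵀ * S = -(S * A) := by
    calc Aᵀ * (G * Q⁻¹ * G) = G * A * Q⁻¹ * G := by
          rw [← mul_assoc, ← mul_assoc, hrec1]
      _ = G * (A * Q⁻¹) * G := by rw [mul_assoc G A Q⁻¹]
      _ = G * (-(Q⁻¹ * Aᵀ)) * G := by rw [hQiA, neg_neg]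
      _ = -(G * Q⁻¹ * (Aᵀ * G)) := by
          simp only [mul_neg, neg_mul, mul_assoc]
      _ = -(G * Q⁻¹ * (G * A)) := by rw [hrec1]
      _ = -(G * Q⁻¹ * G * A) := by simp only [mul_assoc]
  have hBS : Bᵀ * S = Bᵀ * Q := by
    calc Bᵀ * (G * Q⁻¹ * G) = Bᵀ * Q * Q⁻¹ * G := by
          simp only [← Matrix.mul_assoc]; rw [hrec2, ← hcl2]
      _ = Bᵀ * (Q * Q⁻¹) * G := by rw [Matrix.mul_assoc Bᵀ Q Q⁻¹]
      _ = Bᵀ * G := by rw [hQQ', Matrix.mul_one]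
      _ = Bᵀ * Q := by rw [hrec2, ← hcl2]
  set T : Matrix (Fin n) (Fin n) ℝ := S - Q with hT
  have hBT : Bᵀ * T = 0 := by rw [hT, Matrix.mul_sub, hBS, sub_self]
  have hAT : Aᵀ * T = T * (-A) := by
    rw [hT, Matrix.mul_sub, Matrix.sub_mul, hAS, hAQ, mul_neg, mul_neg]
  have hATk : ∀ k : ℕ, Aᵀ ^ k * T = T * (-A) ^ k := by
    intro k
    induction k with
    | zero => simp
    | succ k ih =>
      rw [pow_succ', mul_assoc, ih, ← mul_assoc, hAT, mul_assoc, ← pow_succ']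
  have hBATk : ∀ k : ℕ, Bᵀ * (Aᵀ ^ k * T) = 0 := by
    intro k
    rw [hATk, ← Matrix.mul_assoc, hBT, Matrix.zero_mul]
  have hT0 : T = 0 := by
    ext i j
    have hv := hctrb (fun i => T i j) ?_
    · simpa using congrFun hv i
    · intro k
      have h1 : (Aᵀ ^ k) *ᵥ (fun i => T i j) = (Aᵀ ^ k * T) *ᵥ Pi.single j 1 := by
        rw [← Matrix.mulVec_mulVec, Matrix.mulVec_single_one]
        rfl
      rw [h1, Matrix.mulVec_mulVec, ← Matrix.mul_assoc,
        Matrix.mul_assoc Bᵀ (Aᵀ ^ k) T, hBATk k]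
      simp only [Matrix.zero_mulVec]
  have hQS : Q = S := by
    have h2 : S - Q = 0 := by rw [← hT]; exact hT0
    exact (sub_eq_zero.mp h2).symm
  refine ⟨hD, hQS, ?_, ?_, ?_, ?_⟩
  · calc Q⁻¹ * G * (Q⁻¹ * G) = Q⁻¹ * (G * Q⁻¹ * G) := by simp only [mul_assoc]
      _ = Q⁻¹ * Q := by rw [← hS, ← hQS]
      _ = 1 := hQQ
  · calc Q⁻¹ * G * A = Q⁻¹ * (Aᵀ * G) := by rw [hrec1, mul_assoc]
      _ = Q⁻¹ * Aᵀ * G := by rw [mul_assoc]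
      _ = -(A * Q⁻¹) * G := by rw [hQiA]
      _ = -(A * (Q⁻¹ * G)) := by rw [neg_mul, mul_assoc]
  · rw [Matrix.mul_assoc, hGB, ← Matrix.mul_assoc, hQQ, Matrix.one_mul]
  · calc C * (Q⁻¹ * G) = Bᵀ * Q * (Q⁻¹ * G) := by rw [hcl2]
      _ = Bᵀ * (Q * Q⁻¹) * G := by
          simp only [Matrix.mul_assoc]
      _ = Bᵀ * G := by rw [hQQ', Matrix.mul_one]
      _ = C := hrec2
end

section
/- Let (A,B,C) be a linear system with (A,B) controllable. Suppose there is an invertible skew-symmetric Ω with AᵀΩ + ΩA = 0 and BᵀΩ = C (the system is input-output Hamiltonian), and an invertible symmetric G with AᵀG = GA and BᵀG = C (the system is reciprocal). Then GΩ⁻¹G = Ω, and R := Ω⁻¹G satisfies RA = −AR, RB = −B, CR = C, and R² = I (the system is time-reversible). -/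
open Matrix

/-- A controllable system that is input-output Hamiltonian (with symplectic form `Ω`) and
reciprocal (with pseudo-inner product `G`) satisfies `G Ω⁻¹ G = Ω`, and is time-reversible
with involution `R := Ω⁻¹ G`: `RA = -AR`, `RB = -B`, `CR = C`, `R² = I`. -/
theorem ioHamiltonian_reciprocal_time_reversible {n m : ℕ}
    (A : Matrix (Fin n) (Fin n) ℝ) (B : Matrix (Fin n) (Fin m) ℝ)
    (C : Matrix (Fin m) (Fin n) ℝ)
    (hctrb : ∀ v : Fin n → ℝ, (∀ k : ℕ, Bᵀ *ᵥ ((Aᵀ ^ k) *ᵥ v) = 0) → v = 0)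
    (Ω : Matrix (Fin n) (Fin n) ℝ) (hΩskew : Ωᵀ = -Ω) (hΩinv : IsUnit Ω)
    (hham1 : Aᵀ * Ω + Ω * A = 0) (hham2 : Bᵀ * Ω = C)
    (G : Matrix (Fin n) (Fin n) ℝ) (hGsym : Gᵀ = G) (hGinv : IsUnit G)
    (hrec1 : Aᵀ * G = G * A) (hrec2 : Bᵀ * G = C) :
    G * Ω⁻¹ * G = Ω ∧
    (Ω⁻¹ * G) * A = -(A * (Ω⁻¹ * G)) ∧
    (Ω⁻¹ * G) * B = -B ∧
    C * (Ω⁻¹ * G) = C ∧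
    (Ω⁻¹ * G) * (Ω⁻¹ * G) = 1 := by
  have hd : IsUnit Ω.det := (Matrix.isUnit_iff_isUnit_det Ω).mp hΩinv
  have hΩΩ : Ω * Ω⁻¹ = 1 := Matrix.mul_nonsing_inv Ω hd
  have hΩΩ' : Ω⁻¹ * Ω = 1 := Matrix.nonsing_inv_mul Ω hd
  -- GB = -(ΩB)
  have h1 : Bᵀ * Ω - Bᵀ * G = 0 := by rw [hham2, hrec2, sub_self]
  have hGB : G * B = -(Ω * B) := by
    have h2 := congrArg Matrix.transpose h1
    simp only [Matrix.transpose_sub, Matrix.transpose_mul, Matrix.transpose_zero,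
      Matrix.transpose_transpose, hΩskew, hGsym, Matrix.neg_mul] at h2
    have := sub_eq_zero.mp h2
    exact this.symm
  -- ham in the form AᵀΩ = -(ΩA)
  have hham1' : Aᵀ * Ω = -(Ω * A) := by
    have := hham1
    rw [add_eq_zero_iff_eq_neg] at this
    exact this
  -- A Ω⁻¹ = -(Ω⁻¹ Aᵀ)
  have hAΩ : A * Ω⁻¹ = -(Ω⁻¹ * Aᵀ) := by
    have h : Ω⁻¹ * (Aᵀ * Ω) * Ω⁻¹ = Ω⁻¹ * (-(Ω * A)) * Ω⁻¹ := by rw [hham1']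
    rw [← Matrix.mul_assoc Ω⁻¹ Aᵀ Ω, Matrix.mul_assoc (Ω⁻¹ * Aᵀ), hΩΩ,
      Matrix.mul_one, Matrix.mul_neg, Matrix.neg_mul, ← Matrix.mul_assoc Ω⁻¹ Ω A,
      hΩΩ', Matrix.one_mul] at h
    rw [h, neg_neg]
  -- anticommutation
  have hRA : (Ω⁻¹ * G) * A = -(A * (Ω⁻¹ * G)) := by
    calc (Ω⁻¹ * G) * A = Ω⁻¹ * (G * A) := by rw [Matrix.mul_assoc]
      _ = Ω⁻¹ * (Aᵀ * G) := by rw [hrec1]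
      _ = (Ω⁻¹ * Aᵀ) * G := by rw [Matrix.mul_assoc]
      _ = (-(A * Ω⁻¹)) * G := by rw [hAΩ, neg_neg]
      _ = -(A * (Ω⁻¹ * G)) := by rw [Matrix.neg_mul, Matrix.mul_assoc]
  -- RB = -B
  have hRB : (Ω⁻¹ * G) * B = -B := by
    rw [Matrix.mul_assoc, hGB, Matrix.mul_neg, ← Matrix.mul_assoc, hΩΩ',
      Matrix.one_mul]
  -- CR = C
  have hCΩ : C * Ω⁻¹ = Bᵀ := by
    rw [← hham2, Matrix.mul_assoc, hΩΩ, Matrix.mul_one]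
  have hCR : C * (Ω⁻¹ * G) = C := by
    rw [← Matrix.mul_assoc, hCΩ, hrec2]
  -- M := Ω - G Ω⁻¹ G vanishes
  set M : Matrix (Fin n) (Fin n) ℝ := Ω - G * Ω⁻¹ * G with hM
  have hBM : Bᵀ * M = 0 := by
    have : Bᵀ * (G * Ω⁻¹ * G) = C := by
      rw [← Matrix.mul_assoc, ← Matrix.mul_assoc, hrec2, Matrix.mul_assoc, ← Matrix.mul_assoc,
        hCΩ, hrec2]
    rw [hM, Matrix.mul_sub, hham2, this, sub_self]
  have hAM : Aᵀ * M = -(M * A) := by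
    have h3 : Aᵀ * (G * Ω⁻¹ * G) = -(G * Ω⁻¹ * G * A) := by
      calc Aᵀ * (G * Ω⁻¹ * G) = (Aᵀ * G) * Ω⁻¹ * G := by noncomm_ring
        _ = G * (A * Ω⁻¹) * G := by rw [hrec1]; noncomm_ring
        _ = G * (-(Ω⁻¹ * Aᵀ)) * G := by rw [hAΩ]
        _ = -(G * Ω⁻¹ * (Aᵀ * G)) := by noncomm_ring
        _ = -(G * Ω⁻¹ * (G * A)) := by rw [hrec1]
        _ = -(G * Ω⁻¹ * G * A) := by noncomm_ring
    rw [hM, Matrix.mul_sub, Matrix.sub_mul, hham1', h3]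
    noncomm_ring
  have hkM : ∀ k : ℕ, Bᵀ * ((Aᵀ) ^ k * M) = 0 := by
    intro k
    induction k with
    | zero => simpa using hBM
    | succ k ih =>
      have : (Aᵀ) ^ (k + 1) * M = -(((Aᵀ) ^ k * M) * A) := by
        rw [pow_succ, Matrix.mul_assoc, hAM]
        noncomm_ring
      rw [this, Matrix.mul_neg, ← Matrix.mul_assoc, ih, Matrix.zero_mul, neg_zero]
  have hM0 : M = 0 := by
    ext i j
    have hv := hctrb (M *ᵥ Pi.single j 1) (fun k => by
      rw [Matrix.mulVec_mulVec, Matrix.mulVec_mulVec, Matrix.mul_assoc, hkM,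
        Matrix.zero_mulVec])
    have := congrFun hv i
    simpa [Matrix.mulVec_single] using this
  have hGΩG : G * Ω⁻¹ * G = Ω := by
    have := sub_eq_zero.mp hM0
    exact this.symm
  refine ⟨hGΩG, hRA, hRB, hCR, ?_⟩
  calc (Ω⁻¹ * G) * (Ω⁻¹ * G) = Ω⁻¹ * (G * Ω⁻¹ * G) := by noncomm_ring
    _ = 1 := by rw [hGΩG, hΩΩ']
end

section
/- Let (A,B,C) be a linear system with (A,B) controllable. Suppose there is an invertible symmetric G with AᵀG = GA and BᵀG = C (the system is reciprocal), and an invertible R with RA = −AR, RB = −B, CR = C, and R² = I (the system is time-reversible). Then RᵀGR = −G, and Ω := GR is skew-symmetric, invertible, and satisfies AᵀΩ + ΩA = 0 and BᵀΩ = C (the system is input-output Hamiltonian). -/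
open Matrix

/-- A controllable system that is reciprocal (with pseudo-inner product `G`) and
time-reversible (with involution `R`) satisfies `Rᵀ G R = -G`, and `Ω := G R` is an
invertible skew-symmetric matrix making the system input-output Hamiltonian:
`Aᵀ Ω + Ω A = 0` and `Bᵀ Ω = C`. -/
theorem reciprocal_time_reversible_ioHamiltonian {n m : ℕ}
    (A : Matrix (Fin n) (Fin n) ℝ) (B : Matrix (Fin n) (Fin m) ℝ)
    (C : Matrix (Fin m) (Fin n) ℝ)
    (hctrb : ∀ v : Fin n → ℝ, (∀ k : ℕ, Bᵀ *ᵥ ((Aᵀ ^ k) *ᵥ v) = 0) → v = 0)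
    (G : Matrix (Fin n) (Fin n) ℝ) (hGsym : Gᵀ = G) (hGinv : IsUnit G)
    (hrec1 : Aᵀ * G = G * A) (hrec2 : Bᵀ * G = C)
    (R : Matrix (Fin n) (Fin n) ℝ) (hRinv : IsUnit R)
    (hrev1 : R * A = -(A * R)) (hrev2 : R * B = -B) (hrev3 : C * R = C)
    (hRinvol : R * R = 1) :
    Rᵀ * G * R = -G ∧
    (G * R)ᵀ = -(G * R) ∧ IsUnit (G * R) ∧
    Aᵀ * (G * R) + (G * R) * A = 0 ∧ Bᵀ * (G * R) = C := by
  set M : Matrix (Fin n) (Fin n) ℝ := Rᵀ * G * R + G with hMdef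
  have hBR : Bᵀ * Rᵀ = -Bᵀ := by
    have := congrArg Matrix.transpose hrev2
    simpa [Matrix.transpose_mul] using this
  have hAR : Aᵀ * Rᵀ = -(Rᵀ * Aᵀ) := by
    have := congrArg Matrix.transpose hrev1
    simpa [Matrix.transpose_mul] using this
  have hAR2 : A * R = -(R * A) := by rw [hrev1, neg_neg]
  -- Bᵀ M = 0
  have hBM : Bᵀ * M = 0 := by
    rw [hMdef, Matrix.mul_add, hrec2, ← Matrix.mul_assoc, ← Matrix.mul_assoc, hBR,
      Matrix.neg_mul, Matrix.neg_mul, hrec2, hrev3, neg_add_cancel]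
  -- Aᵀ M = M A
  have key : Aᵀ * (Rᵀ * G * R) = Rᵀ * G * R * A := by
    rw [← Matrix.mul_assoc, ← Matrix.mul_assoc, hAR, Matrix.neg_mul, Matrix.neg_mul,
      Matrix.mul_assoc Rᵀ Aᵀ G, hrec1, ← Matrix.mul_assoc,
      Matrix.mul_assoc (Rᵀ * G) A R, hAR2, Matrix.mul_neg, neg_neg, ← Matrix.mul_assoc]
  have hAM : Aᵀ * M = M * A := by
    rw [hMdef, Matrix.mul_add, Matrix.add_mul, key, hrec1]
  have hk : ∀ k : ℕ, Aᵀ ^ k * M = M * A ^ k := by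
    intro k
    induction k with
    | zero => simp
    | succ k ih =>
      rw [pow_succ' Aᵀ, pow_succ' A, Matrix.mul_assoc, ih, ← Matrix.mul_assoc, hAM,
        Matrix.mul_assoc]
  -- M = 0
  have hMv : ∀ x : Fin n → ℝ, M *ᵥ x = 0 := by
    intro x
    apply hctrb
    intro k
    rw [Matrix.mulVec_mulVec, Matrix.mulVec_mulVec, Matrix.mul_assoc, hk k,
      ← Matrix.mul_assoc, hBM, Matrix.zero_mul, Matrix.zero_mulVec]
  have hM0 : Rᵀ * G * R + G = 0 := by
    rw [← hMdef]
    ext i j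
    have := congrFun (hMv (Pi.single j 1)) i
    simpa [Matrix.mulVec_single] using this
  have hmain : Rᵀ * G * R = -G := eq_neg_of_add_eq_zero_left hM0
  have hRG : Rᵀ * G = -(G * R) := by
    calc Rᵀ * G = Rᵀ * G * (R * R) := by rw [hRinvol, Matrix.mul_one]
      _ = (Rᵀ * G * R) * R := by rw [← Matrix.mul_assoc]
      _ = -G * R := by rw [hmain]
      _ = -(G * R) := by rw [Matrix.neg_mul]
  refine ⟨hmain, ?_, hGinv.mul hRinv, ?_, ?_⟩
  · rw [Matrix.transpose_mul, hGsym, hRG]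
  · rw [← Matrix.mul_assoc, hrec1, Matrix.mul_assoc, hAR2, Matrix.mul_neg,
      Matrix.mul_assoc, neg_add_cancel]
  · rw [← Matrix.mul_assoc, hrec2, hrev3]
end

section
/- Let (A,B,C) be a linear system with (A,B) controllable. Suppose there is an invertible R with RA = −AR, RB = −B, CR = C, and R² = I (the system is time-reversible), and an invertible skew-symmetric Ω with AᵀΩ + ΩA = 0 and BᵀΩ = C (the system is input-output Hamiltonian). Then RᵀΩR = −Ω, and G := ΩR is symmetric, invertible, and satisfies AᵀG = GA and BᵀG = C (the system is reciprocal). -/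
open Matrix

/-- A controllable system that is time-reversible (with involution `R`) and input-output
Hamiltonian (with symplectic form `Ω`) satisfies `Rᵀ Ω R = -Ω`, and `G := Ω R` is a
symmetric invertible matrix making the system reciprocal: `Aᵀ G = G A` and `Bᵀ G = C`. -/
theorem time_reversible_ioHamiltonian_reciprocal {n m : ℕ}
    (A : Matrix (Fin n) (Fin n) ℝ) (B : Matrix (Fin n) (Fin m) ℝ)
    (C : Matrix (Fin m) (Fin n) ℝ)
    (hctrb : ∀ v : Fin n → ℝ, (∀ k : ℕ, Bᵀ *ᵥ ((Aᵀ ^ k) *ᵥ v) = 0) → v = 0)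
    (R : Matrix (Fin n) (Fin n) ℝ) (hRinv : IsUnit R)
    (hrev1 : R * A = -(A * R)) (hrev2 : R * B = -B) (hrev3 : C * R = C)
    (hRinvol : R * R = 1)
    (Ω : Matrix (Fin n) (Fin n) ℝ) (hΩskew : Ωᵀ = -Ω) (hΩinv : IsUnit Ω)
    (hham1 : Aᵀ * Ω + Ω * A = 0) (hham2 : Bᵀ * Ω = C) :
    Rᵀ * Ω * R = -Ω ∧
    (Ω * R)ᵀ = Ω * R ∧ IsUnit (Ω * R) ∧
    Aᵀ * (Ω * R) = (Ω * R) * A ∧ Bᵀ * (Ω * R) = C := by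
  -- basic consequences
  have hAO : Aᵀ * Ω = -(Ω * A) := eq_neg_of_add_eq_zero_left hham1
  have hAR : A * R = -(R * A) := by rw [hrev1, neg_neg]
  set S : Matrix (Fin n) (Fin n) ℝ := Rᵀ * Ω * R + Ω with hS
  have hBS : Bᵀ * S = 0 := by
    have h1 : Bᵀ * Rᵀ = -Bᵀ := by
      have := congrArg Matrix.transpose hrev2
      simpa [Matrix.transpose_mul] using this
    have : Bᵀ * S = Bᵀ * Rᵀ * Ω * R + Bᵀ * Ω := by
      rw [hS, Matrix.mul_add, ← Matrix.mul_assoc, ← Matrix.mul_assoc]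
    rw [this, h1, hham2]
    have : (-Bᵀ) * Ω * R = -(C * R) := by
      rw [Matrix.neg_mul, Matrix.neg_mul, hham2]
    rw [this, hrev3]
    simp
  have hAS : Aᵀ * S = -(S * A) := by
    have hAtRt : Aᵀ * Rᵀ = -(Rᵀ * Aᵀ) := by
      have := congrArg Matrix.transpose hrev1
      simpa [Matrix.transpose_mul] using this
    have : Aᵀ * (Rᵀ * Ω * R) = -(Rᵀ * Ω * R * A) := by
      calc Aᵀ * (Rᵀ * Ω * R) = (Aᵀ * Rᵀ) * Ω * R := by noncomm_ring
        _ = -(Rᵀ * (Aᵀ * Ω) * R) := by rw [hAtRt]; noncomm_ring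
        _ = Rᵀ * (Ω * A) * R := by rw [hAO]; noncomm_ring
        _ = Rᵀ * Ω * (A * R) := by noncomm_ring
        _ = -(Rᵀ * Ω * R * A) := by rw [hAR]; noncomm_ring
    calc Aᵀ * S = Aᵀ * (Rᵀ * Ω * R) + Aᵀ * Ω := by rw [hS, Matrix.mul_add]
      _ = -(Rᵀ * Ω * R * A) + -(Ω * A) := by rw [this, hAO]
      _ = -(S * A) := by rw [hS]; noncomm_ring
  have hkey : ∀ k : ℕ, Bᵀ * ((Aᵀ) ^ k * S) = 0 := by
    intro k
    induction k with
    | zero => simpa using hBS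
    | succ k ih =>
        have : (Aᵀ) ^ (k + 1) * S = -((Aᵀ) ^ k * S * A) := by
          rw [pow_succ, mul_assoc, hAS]; noncomm_ring
        rw [this, Matrix.mul_neg, ← Matrix.mul_assoc, ← Matrix.mul_assoc,
          Matrix.mul_assoc Bᵀ, ih, Matrix.zero_mul, neg_zero]
  have hS0 : S = 0 := by
    have hv : ∀ v : Fin n → ℝ, S *ᵥ v = 0 := by
      intro v
      apply hctrb
      intro k
      rw [Matrix.mulVec_mulVec, Matrix.mulVec_mulVec, Matrix.mul_assoc, hkey k]
      simp
    ext i j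
    have := congrFun (hv (Pi.single j 1)) i
    simpa [Matrix.mulVec_single] using this
  have h1 : Rᵀ * Ω * R = -Ω := eq_neg_of_add_eq_zero_left (hS ▸ hS0)
  -- RᵀΩ = -ΩR
  have hRtO : Rᵀ * Ω = -(Ω * R) := by
    have h2 : Rᵀ * Ω * R * R = -Ω * R := by rw [h1]
    rw [Matrix.mul_assoc (Rᵀ * Ω), hRinvol, Matrix.mul_one] at h2
    rw [h2, Matrix.neg_mul]
  refine ⟨h1, ?_, hΩinv.mul hRinv, ?_, ?_⟩
  · rw [Matrix.transpose_mul, hΩskew]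
    calc Rᵀ * -Ω = -(Rᵀ * Ω) := by noncomm_ring
      _ = Ω * R := by rw [hRtO, neg_neg]
  · calc Aᵀ * (Ω * R) = (Aᵀ * Ω) * R := by noncomm_ring
      _ = -(Ω * (A * R)) := by rw [hAO]; noncomm_ring
      _ = Ω * (R * A) := by rw [hAR]; noncomm_ring
      _ = (Ω * R) * A := by noncomm_ring
  · calc Bᵀ * (Ω * R) = (Bᵀ * Ω) * R := by rw [Matrix.mul_assoc]
      _ = C := by rw [hham2, hrev3]
end

section
/- Let (A,B,C,D) be a linear system satisfying the input-output Hamiltonian relations with respect to a signature matrix σ and an invertible skew-symmetric Ω: AᵀΩ + ΩA = 0, BᵀΩ = σC, σD = Dᵀσ. Let (x₁,u₁,y₁) and (x₂,u₂,y₂) be two trajectories, i.e., xᵢ : ℝ → ℝⁿ differentiable with xᵢ'(t) = Axᵢ(t) + Buᵢ(t) and yᵢ(t) = Cxᵢ(t) + Duᵢ(t). Then for every t, the function t ↦ x₂(t)ᵀΩx₁(t) is differentiable with derivative u₂(t)ᵀσy₁(t) − y₂(t)ᵀσu₁(t). -/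
/-!
By the product rule, `d/dt (x₂ᵀ Ω x₁) = (A x₂ + B u₂)ᵀ Ω x₁ + x₂ᵀ Ω (A x₁ + B u₁)`. The relation
`AᵀΩ + ΩA = 0` kills the two `A`-terms, `BᵀΩ = σC` and its transpose `ΩB = -Cᵀσ` turn the `B`-terms
into `u₂ᵀσCx₁ - (Cx₂)ᵀσu₁`, and `σD = Dᵀσ` makes `u₂ᵀσDu₁ - (Du₂)ᵀσu₁` vanish, which is what is
needed to complete these to `u₂ᵀσy₁ - y₂ᵀσu₁`.
-/

open Matrix

section Calculus

variable {𝕜 : Type*} [NontriviallyNormedField 𝕜] {ι κ : Type*} [Fintype ι] {t : 𝕜}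

theorem HasDerivAt.dotProduct {f g : 𝕜 → ι → 𝕜} {f' g' : ι → 𝕜}
    (hf : HasDerivAt f f' t) (hg : HasDerivAt g g' t) :
    HasDerivAt (fun s => f s ⬝ᵥ g s) (f' ⬝ᵥ g t + f t ⬝ᵥ g') t := by
  simp only [_root_.dotProduct, ← Finset.sum_add_distrib]
  exact HasDerivAt.fun_sum fun i _ => (hasDerivAt_pi.mp hf i).mul (hasDerivAt_pi.mp hg i)

theorem HasDerivAt.matrix_mulVec (M : Matrix κ ι 𝕜) {x : 𝕜 → ι → 𝕜} {x' : ι → 𝕜}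
    (hx : HasDerivAt x x' t) :
    HasDerivAt (fun s => M *ᵥ x s) (M *ᵥ x') t := by
  refine hasDerivAt_pi.2 fun i => ?_
  simpa only [mulVec, _root_.dotProduct] using
    HasDerivAt.fun_sum fun j (_ : j ∈ Finset.univ) => (hasDerivAt_pi.1 hx j).const_mul (M i j)

end Calculus

section Algebra

variable {R : Type*} [CommRing R] {ι κ : Type*} [Fintype ι] [Fintype κ]

theorem mulVec_dotProduct_mulVec {ι' : Type*} [Fintype ι'] (N : Matrix ι' κ R)
    (M : Matrix ι' ι R) (q : κ → R) (p : ι → R) : (N *ᵥ q) ⬝ᵥ (M *ᵥ p) = q ⬝ᵥ ((Nᵀ * M) *ᵥ p) := by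
  rw [dotProduct_mulVec, ← vecMul_transpose, vecMul_vecMul, ← dotProduct_mulVec]

theorem ioHamiltonian_balance (A : Matrix ι ι R) (B : Matrix ι κ R) (C : Matrix κ ι R)
    (D : Matrix κ κ R) {σ : Matrix κ κ R} (hσ : σᵀ = σ) {Ω : Matrix ι ι R} (hΩ : Ωᵀ = -Ω)
    (hAΩ : Aᵀ * Ω + Ω * A = 0) (hBΩ : Bᵀ * Ω = σ * C) (hσD : σ * D = Dᵀ * σ)
    (x₁ x₂ : ι → R) (u₁ u₂ : κ → R) :
    (A *ᵥ x₂ + B *ᵥ u₂) ⬝ᵥ (Ω *ᵥ x₁) + x₂ ⬝ᵥ (Ω *ᵥ (A *ᵥ x₁ + B *ᵥ u₁)) =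
      u₂ ⬝ᵥ (σ *ᵥ (C *ᵥ x₁ + D *ᵥ u₁)) - (C *ᵥ x₂ + D *ᵥ u₂) ⬝ᵥ (σ *ᵥ u₁) := by
  have hA : (A *ᵥ x₂) ⬝ᵥ (Ω *ᵥ x₁) + x₂ ⬝ᵥ (Ω *ᵥ (A *ᵥ x₁)) = 0 := by
    rw [mulVec_dotProduct_mulVec, mulVec_mulVec, ← dotProduct_add, ← add_mulVec, hAΩ,
      zero_mulVec, dotProduct_zero]
  have hB : (B *ᵥ u₂) ⬝ᵥ (Ω *ᵥ x₁) = u₂ ⬝ᵥ (σ *ᵥ (C *ᵥ x₁)) := by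
    rw [mulVec_dotProduct_mulVec, hBΩ, mulVec_mulVec]
  have hΩB : x₂ ⬝ᵥ (Ω *ᵥ (B *ᵥ u₁)) = -((C *ᵥ x₂) ⬝ᵥ (σ *ᵥ u₁)) := by
    have h := congrArg transpose hBΩ
    rw [transpose_mul, transpose_mul, transpose_transpose, hΩ, hσ, Matrix.neg_mul] at h
    rw [mulVec_mulVec, mulVec_dotProduct_mulVec, ← neg_neg (Ω * B), h, neg_mulVec,
      dotProduct_neg]
  have hD : (D *ᵥ u₂) ⬝ᵥ (σ *ᵥ u₁) = u₂ ⬝ᵥ (σ *ᵥ (D *ᵥ u₁)) := by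
    rw [mulVec_dotProduct_mulVec, ← hσD, mulVec_mulVec]
  simp only [mulVec_add, add_dotProduct, dotProduct_add]
  linear_combination hA + hB + hΩB + hD

end Algebra

theorem ioHamiltonian_defining_identity_general {n m : ℕ}
    (A : Matrix (Fin n) (Fin n) ℝ) (B : Matrix (Fin n) (Fin m) ℝ)
    (C : Matrix (Fin m) (Fin n) ℝ) (D : Matrix (Fin m) (Fin m) ℝ)
    (σ : Matrix (Fin m) (Fin m) ℝ) (hσdiag : σ.IsDiag)
    (Ω : Matrix (Fin n) (Fin n) ℝ) (hΩskew : Ωᵀ = -Ω)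
    (hham1 : Aᵀ * Ω + Ω * A = 0) (hham2 : Bᵀ * Ω = σ * C) (hham3 : σ * D = Dᵀ * σ)
    (x₁ x₂ : ℝ → Fin n → ℝ) (u₁ u₂ : ℝ → Fin m → ℝ) (y₁ y₂ : ℝ → Fin m → ℝ)
    (hx₁ : ∀ t, HasDerivAt x₁ (A *ᵥ x₁ t + B *ᵥ u₁ t) t)
    (hx₂ : ∀ t, HasDerivAt x₂ (A *ᵥ x₂ t + B *ᵥ u₂ t) t)
    (hy₁ : ∀ t, y₁ t = C *ᵥ x₁ t + D *ᵥ u₁ t)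
    (hy₂ : ∀ t, y₂ t = C *ᵥ x₂ t + D *ᵥ u₂ t) :
    ∀ t, HasDerivAt (fun s => x₂ s ⬝ᵥ (Ω *ᵥ x₁ s))
      (u₂ t ⬝ᵥ (σ *ᵥ y₁ t) - y₂ t ⬝ᵥ (σ *ᵥ u₁ t)) t := by
  intro t
  rw [hy₁, hy₂, ← ioHamiltonian_balance A B C D hσdiag.isSymm hΩskew hham1 hham2 hham3]
  exact (hx₂ t).dotProduct ((hx₁ t).matrix_mulVec Ω)

/-- Defining identity of input-output Hamiltonian systems: for any two trajectories
`(x₁,u₁,y₁)` and `(x₂,u₂,y₂)`, `d/dt (x₂ᵀ Ω x₁) = u₂ᵀ σ y₁ - y₂ᵀ σ u₁`. -/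
theorem ioHamiltonian_defining_identity {n m : ℕ}
    (A : Matrix (Fin n) (Fin n) ℝ) (B : Matrix (Fin n) (Fin m) ℝ)
    (C : Matrix (Fin m) (Fin n) ℝ) (D : Matrix (Fin m) (Fin m) ℝ)
    (σ : Matrix (Fin m) (Fin m) ℝ) (hσdiag : σ.IsDiag)
    (hσsign : ∀ i, σ i i = 1 ∨ σ i i = -1)
    (Ω : Matrix (Fin n) (Fin n) ℝ) (hΩskew : Ωᵀ = -Ω) (hΩinv : IsUnit Ω)
    (hham1 : Aᵀ * Ω + Ω * A = 0) (hham2 : Bᵀ * Ω = σ * C) (hham3 : σ * D = Dᵀ * σ)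
    (x₁ x₂ : ℝ → Fin n → ℝ) (u₁ u₂ : ℝ → Fin m → ℝ) (y₁ y₂ : ℝ → Fin m → ℝ)
    (hx₁ : ∀ t, HasDerivAt x₁ (A *ᵥ x₁ t + B *ᵥ u₁ t) t)
    (hx₂ : ∀ t, HasDerivAt x₂ (A *ᵥ x₂ t + B *ᵥ u₂ t) t)
    (hy₁ : ∀ t, y₁ t = C *ᵥ x₁ t + D *ᵥ u₁ t)
    (hy₂ : ∀ t, y₂ t = C *ᵥ x₂ t + D *ᵥ u₂ t) :
    ∀ t, HasDerivAt (fun s => x₂ s ⬝ᵥ (Ω *ᵥ x₁ s))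
      (u₂ t ⬝ᵥ (σ *ᵥ y₁ t) - y₂ t ⬝ᵥ (σ *ᵥ u₁ t)) t :=
  ioHamiltonian_defining_identity_general A B C D σ hσdiag Ω hΩskew hham1 hham2 hham3 x₁ x₂ u₁ u₂ y₁
    y₂ hx₁ hx₂ hy₁ hy₂
end

section
/- Let V be a finite-dimensional real vector space with dual space V*. On V × V* define the symmetric pairing [[(f_a,e_a),(f_b,e_b)]] := e_a(f_b) + e_b(f_a) and the symplectic pairing ω((f_a,e_a),(f_b,e_b)) := e_a(f_b) − e_b(f_a). Let D ⊆ V × V* be a Dirac structure, i.e., D equals its orthogonal complement with respect to [[·,·]]. Then D is separable — meaning D = K × K⁰ for some subspace K ⊆ V, where K⁰ ⊆ V* is the annihilator of K — if and only if D is Lagrangian, i.e., D equals its orthogonal complement with respect to ω. -/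
/-- A Dirac structure `D ⊆ V × V*` (a subspace equal to its orthogonal complement with
respect to the symmetric pairing `[[(f_a,e_a),(f_b,e_b)]] = e_a(f_b) + e_b(f_a)`) is
separable, i.e., `D = K × K⁰` for some subspace `K ⊆ V` with annihilator `K⁰`, if and
only if `D` is Lagrangian, i.e., `D` equals its orthogonal complement with respect to
the symplectic form `ω((f_a,e_a),(f_b,e_b)) = e_a(f_b) - e_b(f_a)`. -/
theorem dirac_separable_iff_lagrangian {V : Type*}
    [AddCommGroup V] [Module ℝ V] [FiniteDimensional ℝ V]
    (D : Submodule ℝ (V × Module.Dual ℝ V))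
    (hDirac : (D : Set (V × Module.Dual ℝ V)) =
      {p | ∀ q ∈ D, p.2 q.1 + q.2 p.1 = 0}) :
    (∃ K : Submodule ℝ V, D = K.prod K.dualAnnihilator) ↔
      (D : Set (V × Module.Dual ℝ V)) = {p | ∀ q ∈ D, p.2 q.1 - q.2 p.1 = 0} := by
  constructor
  · rintro ⟨K, rfl⟩
    ext p
    simp only [Set.mem_setOf_eq, SetLike.mem_coe, Submodule.mem_prod,
      Submodule.mem_dualAnnihilator] at *
    constructor
    · rintro ⟨h1, h2⟩ q ⟨hq1, hq2⟩
      rw [h2 q.1 hq1, hq2 p.1 h1, sub_zero]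
    · intro hp
      constructor
      · rw [← Subspace.dualAnnihilator_dualCoannihilator_eq (W := K),
          Submodule.mem_dualCoannihilator]
        intro e he
        have := hp (0, e) ⟨K.zero_mem, by simpa using he⟩
        simpa using this
      · intro k hk
        have := hp (k, 0) ⟨hk, by simp⟩
        simpa using this
  · intro hLag
    have hzero : ∀ p ∈ D, ∀ q ∈ D, p.2 q.1 = 0 := by
      intro p hp q hq
      have h1 : p.2 q.1 + q.2 p.1 = 0 := by
        have := (Set.ext_iff.mp hDirac p).mp hp
        exact this q hq
      have h2 : p.2 q.1 - q.2 p.1 = 0 := by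
        have := (Set.ext_iff.mp hLag p).mp hp
        exact this q hq
      linarith
    refine ⟨Submodule.map (LinearMap.fst ℝ V _) D, ?_⟩
    ext p
    simp only [Submodule.mem_prod, Submodule.mem_dualAnnihilator, Submodule.mem_map,
      LinearMap.fst_apply]
    constructor
    · intro hp
      refine ⟨⟨p, hp, rfl⟩, ?_⟩
      rintro k ⟨q, hq, rfl⟩
      exact hzero p hp q hq
    · rintro ⟨⟨q, hq, hq1⟩, hp2⟩
      -- p = q + (0, p.2 - q.2); show (0, p.2 - q.2) ∈ D using Dirac
      have hq2 : (0, p.2 - q.2) ∈ D := by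
        have : ((0 : V), p.2 - q.2) ∈ (D : Set (V × Module.Dual ℝ V)) := by
          rw [hDirac]
          intro r hr
          have h1 : p.2 r.1 = 0 := hp2 r.1 ⟨r, hr, rfl⟩
          have h2 : q.2 r.1 = 0 := hzero q hq r hr
          simp [h1, h2]
        exact this
      have : p = q + (0, p.2 - q.2) := by
        ext
        · simp [hq1]
        · simp
      rw [this]
      exact D.add_mem hq hq2
end

section
/- Let (A,B,C) satisfy the reciprocity relations AᵀG = GA and BᵀG = σC with G symmetric and σ a signature matrix, and let 𝒞 be an n×n matrix satisfying the controllability Lyapunov equation A𝒞 + 𝒞Aᵀ = −BBᵀ. Then the matrix Z := 𝒞G satisfies the cross-Gramian Sylvester equation AZ + ZA = −BσC, and the matrix G𝒞G satisfies the observability Lyapunov equation Aᵀ(G𝒞G) + (G𝒞G)A = −CᵀC. -/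
open Matrix

/-- For a reciprocal system `(A,B,C)` with pseudo-inner product `G` and signature `σ`,
if `𝓒` satisfies the controllability Lyapunov equation `A 𝓒 + 𝓒 Aᵀ = -B Bᵀ`, then
`Z := 𝓒 G` satisfies the cross-Gramian Sylvester equation `A Z + Z A = -B σ C`, and
`G 𝓒 G` satisfies the observability Lyapunov equation `Aᵀ (G 𝓒 G) + (G 𝓒 G) A = -Cᵀ C`. -/
theorem crossGramian_of_reciprocal {n m : ℕ}
    (A : Matrix (Fin n) (Fin n) ℝ) (B : Matrix (Fin n) (Fin m) ℝ)
    (C : Matrix (Fin m) (Fin n) ℝ)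
    (σ : Matrix (Fin m) (Fin m) ℝ) (hσdiag : σ.IsDiag)
    (hσsign : ∀ i, σ i i = 1 ∨ σ i i = -1)
    (G : Matrix (Fin n) (Fin n) ℝ) (hGsym : Gᵀ = G)
    (hrec1 : Aᵀ * G = G * A) (hrec2 : Bᵀ * G = σ * C)
    (𝓒 : Matrix (Fin n) (Fin n) ℝ) (hLyap : A * 𝓒 + 𝓒 * Aᵀ = -(B * Bᵀ)) :
    A * (𝓒 * G) + (𝓒 * G) * A = -(B * (σ * C)) ∧
    Aᵀ * (G * 𝓒 * G) + (G * 𝓒 * G) * A = -(Cᵀ * C) := by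
  have hσsym : σᵀ = σ := hσdiag.isSymm
  have hσ2 : σ * σ = 1 := by
    rw [← hσdiag.diagonal_diag, diagonal_mul_diagonal]
    ext i j
    by_cases hij : i = j
    · rcases hσsign j with h | h <;>
        simp [hij, diagonal_apply, Matrix.one_apply, Matrix.diag, h]
    · simp [diagonal_apply, Matrix.one_apply, hij]
  have hGB : G * B = Cᵀ * σ := by
    have h := congrArg Matrix.transpose hrec2
    rwa [transpose_mul, transpose_mul, hGsym, hσsym] at h
  have h1 := congrArg (fun X => X * G) hLyap
  simp only [add_mul, neg_mul, mul_assoc] at h1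
  rw [hrec1, Matrix.mul_assoc B Bᵀ G, hrec2] at h1
  refine ⟨by rw [mul_assoc 𝓒 G A]; exact h1, ?_⟩
  have h2 := congrArg (fun X => G * X) h1
  simp only [mul_add, mul_neg] at h2
  rw [show Aᵀ * (G * 𝓒 * G) = G * (A * (𝓒 * G)) by
        rw [mul_assoc G 𝓒 G, ← mul_assoc, hrec1, mul_assoc],
      show (G * 𝓒 * G) * A = G * (𝓒 * (G * A)) by rw [mul_assoc, mul_assoc],
      h2, ← Matrix.mul_assoc, hGB, Matrix.mul_assoc, ← Matrix.mul_assoc σ σ C, hσ2, Matrix.one_mul]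
end
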